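/- arXiv:2512.21397 — 2 statements merged into one kernel-verified Lean document; each statement's English description precedes it below -/
import Mathlib

section
/- An unrooted binary phylogenetic tree on leaf set X is uniquely determined (up to label-preserving isomorphism) by its set of splits: if Γ(T) = Γ(R) then T ≅ R. -/
/-!
Common definitions: unrooted binary phylogenetic trees on a finite leaf set `X`,
splits, Robinson–Foulds distance, label-preserving isomorphism, and the
NNI / SPR / TBR adjacency relations together with paths in the corresponding graphs.
-/

noncomputable section

open Classical

/-- Vertex type for a binary phylogenetic tree on leaf set `X`:
leaves are labelled by `X` and there are `|X| - 2` internal vertices. -/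
abbrev PVert (X : Type) [Fintype X] := X ⊕ Fin (Fintype.card X - 2)

/-- An unrooted binary phylogenetic tree on leaf set `X`: a tree on the vertex
set `PVert X` in which every leaf label has degree 1 and every internal vertex
has degree 3. -/
structure PhyloTree (X : Type) [Fintype X] where
  graph : SimpleGraph (PVert X)
  isTree : graph.IsTree
  leaf_deg : ∀ x : X, (graph.neighborSet (Sum.inl x)).ncard = 1
  internal_deg : ∀ i : Fin (Fintype.card X - 2), (graph.neighborSet (Sum.inr i)).ncard = 3

variable {X : Type} [Fintype X]

/-- The set of leaves on the `u`-side after deleting the edge `{u, v}`. -/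
def sideOf (T : PhyloTree X) (u v : PVert X) : Set X :=
  {x | (T.graph.deleteEdges {s(u, v)}).Reachable (Sum.inl x) u}

/-- The split (unordered bipartition of the leaf set) induced by the edge `{u, v}`. -/
def splitOf (T : PhyloTree X) (u v : PVert X) : Sym2 (Set X) :=
  s(sideOf T u v, sideOf T v u)

/-- The split set `Γ(T)` of a tree: all splits induced by its edges. -/
def splits (T : PhyloTree X) : Set (Sym2 (Set X)) :=
  {σ | ∃ u v, T.graph.Adj u v ∧ σ = splitOf T u v}

/-- A split is trivial if one of its sides is a singleton. -/
def TrivialSplit (σ : Sym2 (Set X)) : Prop := ∃ x : X, ({x} : Set X) ∈ σ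

/-- The size of a split `A|B` is `min (|A|, |B|)`. -/
def splitSize (σ : Sym2 (Set X)) : ℕ :=
  Sym2.lift ⟨fun A B => min A.ncard B.ncard, fun _ _ => min_comm _ _⟩ σ

/-- The Robinson–Foulds distance: the size of the symmetric difference of split sets. -/
def dRF (T R : PhyloTree X) : ℕ := (symmDiff (splits T) (splits R)).ncard

/-- Label-preserving isomorphism of phylogenetic trees. -/
def Isom (T R : PhyloTree X) : Prop :=
  ∃ φ : T.graph ≃g R.graph, ∀ x : X, φ (Sum.inl x) = Sum.inl x

/-- The sides of a tree: subsets of `X` arising as one side of some edge. -/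
def sides (T : PhyloTree X) : Set (Set X) :=
  {A | ∃ u v, T.graph.Adj u v ∧ A = sideOf T u v}

/-- The split set of the restriction of `T` to `A` (encoded by intersecting all
sides with `A`); two trees have isomorphic induced subtrees on `A` iff these agree. -/
def restrSides (T : PhyloTree X) (A : Set X) : Set (Set X) :=
  (fun B => B ∩ A) '' sides T

/-- The clades of `T` inside `A`: sides contained in `A`.  If `A` is a side of `T`
these determine the rooted subtree of `T` on `A` together with its attachment. -/
def clades (T : PhyloTree X) (A : Set X) : Set (Set X) :=
  {B ∈ sides T | B ⊆ A}

/-- NNI adjacency: the two (binary) trees differ in exactly one split. -/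
def NNIAdj (T R : PhyloTree X) : Prop := (symmDiff (splits T) (splits R)).ncard = 2

/-- SPR adjacency: for some side `A` of both trees, the rooted subtree on `A`
(the pruned part, with its attachment) is unchanged and the rest of the tree
(unrooted, with the attachment point forgotten) is unchanged. -/
def SPRAdj (T R : PhyloTree X) : Prop :=
  ¬ Isom T R ∧ ∃ A : Set X, s(A, Aᶜ) ∈ splits T ∧ s(A, Aᶜ) ∈ splits R ∧
    clades T A = clades R A ∧ restrSides T Aᶜ = restrSides R Aᶜ

/-- TBR adjacency: for some side `A` of both trees, the unrooted restrictions to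
`A` and to its complement are unchanged. -/
def TBRAdj (T R : PhyloTree X) : Prop :=
  ¬ Isom T R ∧ ∃ A : Set X, s(A, Aᶜ) ∈ splits T ∧ s(A, Aᶜ) ∈ splits R ∧
    restrSides T A = restrSides R A ∧ restrSides T Aᶜ = restrSides R Aᶜ

/-- `p 0, p 1, …, p k` is a path from `T` to `R` in the rearrangement graph with
adjacency relation `Adj`. -/
def IsPath (Adj : PhyloTree X → PhyloTree X → Prop) (T R : PhyloTree X)
    (k : ℕ) (p : ℕ → PhyloTree X) : Prop :=
  Isom (p 0) T ∧ Isom (p k) R ∧ ∀ i < k, Adj (p i) (p (i + 1))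

/-- Graph distance in the rearrangement graph with adjacency `Adj` (∞ if no path). -/
def gdist (Adj : PhyloTree X → PhyloTree X → Prop) (T R : PhyloTree X) : ℕ∞ :=
  sInf ((fun k : ℕ => (k : ℕ∞)) '' {k | ∃ p : ℕ → PhyloTree X, IsPath Adj T R k p})

/-- A cherry: two distinct leaves adjacent to a common vertex. -/
def IsCherry (T : PhyloTree X) (c₁ c₂ : X) : Prop :=
  c₁ ≠ c₂ ∧ ∃ v : PVert X, T.graph.Adj (Sum.inl c₁) v ∧ T.graph.Adj (Sum.inl c₂) v

end

noncomputable section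
namespace SplitAux

open SimpleGraph Classical

variable {V : Type}

lemma isPath_concat {G : SimpleGraph V} {u v w : V} {p : G.Walk u v} (hp : p.IsPath)
    (h : G.Adj v w) (hw : w ∉ p.support) : (p.concat h).IsPath := by
  rw [SimpleGraph.Walk.isPath_def, SimpleGraph.Walk.support_concat]
  refine List.Nodup.append hp.support_nodup (List.nodup_singleton w) ?_
  intro a ha hb
  rw [List.mem_singleton] at hb
  subst hb
  exact hw ha

lemma reach_cross (G : SimpleGraph V) (E : Set (Sym2 V)) (a b : V) {x y : V}
    (h : (G.deleteEdges (E \ {s(a,b)})).Reachable x y) :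
    (G.deleteEdges E).Reachable x y ∨
      ((G.deleteEdges E).Reachable x a ∧ (G.deleteEdges E).Reachable b y) ∨
      ((G.deleteEdges E).Reachable x b ∧ (G.deleteEdges E).Reachable a y) := by
  obtain ⟨w⟩ := h
  induction w with
  | nil => exact Or.inl (Reachable.refl _)
  | @cons x z y h' p ih =>
    rw [SimpleGraph.deleteEdges_adj] at h'
    obtain ⟨hadj, hne⟩ := h'
    by_cases hE : s(x, z) ∈ E
    · have : s(x, z) = s(a, b) := by
        by_contra hne2
        exact hne ⟨hE, hne2⟩
      rw [Sym2.eq_iff] at this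
      rcases this with ⟨rfl, rfl⟩ | ⟨rfl, rfl⟩
      · rcases ih with h1 | ⟨h1, h2⟩ | ⟨h1, h2⟩
        · exact Or.inr (Or.inl ⟨Reachable.refl _, h1⟩)
        · exact Or.inl ((h1.symm).trans h2)
        · exact Or.inl h2
      · rcases ih with h1 | ⟨h1, h2⟩ | ⟨h1, h2⟩
        · exact Or.inr (Or.inr ⟨Reachable.refl _, h1⟩)
        · exact Or.inl h2
        · exact Or.inr (Or.inr ⟨Reachable.refl _, h2⟩)
    · have hstep : (G.deleteEdges E).Reachable x z := Adj.reachable (by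
        rw [SimpleGraph.deleteEdges_adj]; exact ⟨hadj, hE⟩)
      rcases ih with h1 | ⟨h1, h2⟩ | ⟨h1, h2⟩
      · exact Or.inl (hstep.trans h1)
      · exact Or.inr (Or.inl ⟨hstep.trans h1, h2⟩)
      · exact Or.inr (Or.inr ⟨hstep.trans h1, h2⟩)

lemma reach_dichot (G : SimpleGraph V) (E : Set (Sym2 V)) {x y : V} (h : G.Reachable x y) :
    ∃ z, (G.deleteEdges E).Reachable x z ∧ (z = y ∨ ∃ e ∈ E, z ∈ e) := by
  obtain ⟨w⟩ := h
  induction w with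
  | nil => exact ⟨_, Reachable.refl _, Or.inl rfl⟩
  | @cons x z y h' p ih =>
    by_cases hE : s(x, z) ∈ E
    · exact ⟨x, Reachable.refl _, Or.inr ⟨s(x, z), hE, Sym2.mem_mk_left x z⟩⟩
    · obtain ⟨z', hz', hz''⟩ := ih
      exact ⟨z', (Adj.reachable (by rw [SimpleGraph.deleteEdges_adj]; exact ⟨h', hE⟩)).trans hz',
        hz''⟩

lemma acyclic_deleteEdges {G : SimpleGraph V} (hg : G.IsAcyclic) (E : Set (Sym2 V)) :
    (G.deleteEdges E).IsAcyclic := by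
  intro v c hc
  exact hg (c.mapLe (SimpleGraph.deleteEdges_le E)) (hc.mapLe _)

lemma bridge_not_reach {G : SimpleGraph V} (hg : G.IsAcyclic) {a b : V} (hadj : G.Adj a b)
    {E : Set (Sym2 V)} (hE : s(a,b) ∈ E) : ¬ (G.deleteEdges E).Reachable a b := by
  intro hr
  have hb := isAcyclic_iff_forall_adj_isBridge.mp hg hadj
  exact hb (hr.mono (SimpleGraph.deleteEdges_anti (by simpa using hE)))

lemma reach_isolated {G : SimpleGraph V} {u w : V} (hu : ∀ z, ¬ G.Adj u z)
    (h : G.Reachable w u) : w = u := by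
  obtain ⟨p⟩ := h.symm
  cases p with
  | nil => rfl
  | cons h' p => exact absurd h' (hu _)

lemma path_length_eq_dist {G : SimpleGraph V} (hg : G.IsAcyclic) {u v : V} (p : G.Walk u v)
    (hp : p.IsPath) : p.length = G.dist u v := by
  obtain ⟨q, hq, hql⟩ := Reachable.exists_path_of_dist ⟨p⟩
  have : (⟨p, hp⟩ : G.Path u v) = ⟨q, hq⟩ := hg.path_unique _ _
  rw [← hql]
  exact congrArg Walk.length (congrArg Subtype.val this)

lemma maxleaf [Fintype V] {G : SimpleGraph V} (hg : G.IsAcyclic) (u : V) :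
    (∀ w, G.Reachable w u → w = u) ∨
      ∃ w, w ≠ u ∧ G.Reachable w u ∧ ∀ z₁ z₂, G.Adj w z₁ → G.Adj w z₂ → z₁ = z₂ := by
  by_cases hall : ∀ w, G.Reachable w u → w = u
  · exact Or.inl hall
  push_neg at hall
  obtain ⟨w₀, hw₀r, hw₀ne⟩ := hall
  classical
  have hSne : (Finset.univ.filter (fun w => G.Reachable w u)).Nonempty :=
    ⟨w₀, by simp [hw₀r]⟩
  obtain ⟨w, hwS, hmax⟩ := Finset.exists_max_image _ (fun w => G.dist u w) hSne
  simp only [Finset.mem_filter, Finset.mem_univ, true_and] at hwS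
  have hmax' : ∀ z, G.Reachable z u → G.dist u z ≤ G.dist u w := by
    intro z hz
    exact hmax z (by simp [hz])
  have hne : w ≠ u := by
    intro h
    subst h
    have h1 := hmax' w₀ hw₀r
    have h2 : 0 < G.dist w₀ w := Reachable.pos_dist_of_ne hw₀r (by
      intro hh; exact hw₀ne hh)
    have h3 : G.dist w w = 0 := SimpleGraph.dist_self
    have h4 : G.dist w₀ w = G.dist w w₀ := SimpleGraph.dist_comm
    omega
  obtain ⟨p, hp, hpl⟩ := Reachable.exists_path_of_dist hwS.symm
  refine Or.inr ⟨w, hne, hwS, ?_⟩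
  have key : ∀ z, G.Adj w z → z = p.reverse.getVert 1 := by
    intro z hadj
    have hzr : G.Reachable z u := (hadj.symm.reachable).trans hwS
    have hzw : z ≠ w := fun h => by subst h; exact G.irrefl hadj
    by_cases hzs : z ∈ p.support
    · have hp₁ := hp.takeUntil hzs
      set p₁ := p.takeUntil z hzs with hp₁def
      have hwns : w ∉ p₁.support := by
        intro hww
        have hnd := hp.support_nodup
        have hsp := p.take_spec hzs
        rw [← hsp, Walk.support_append] at hnd
        have hdisj := List.disjoint_of_nodup_append hnd
        have hwdrop : w ∈ (p.dropUntil z hzs).support.tail := by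
          have hend : w ∈ (p.dropUntil z hzs).support := Walk.end_mem_support _
          rw [Walk.support_eq_cons] at hend
          rcases List.mem_cons.mp hend with h | h
          · exact absurd h (Ne.symm hzw)
          · exact h
        exact hdisj hww hwdrop
      have hq : (p₁.concat hadj.symm).IsPath := isPath_concat hp₁ hadj.symm hwns
      have hpq : p₁.concat hadj.symm = p := by
        have := hg.path_unique (⟨p₁.concat hadj.symm, hq⟩ : G.Path u w) ⟨p, hp⟩
        exact congrArg Subtype.val this
      rw [← hpq, Walk.reverse_concat, Walk.getVert_cons_succ, Walk.getVert_zero]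
    · have hq : (p.concat hadj).IsPath := isPath_concat hp hadj hzs
      have hlen := path_length_eq_dist hg _ hq
      rw [Walk.length_concat, hpl] at hlen
      have := hmax' z hzr
      omega
  intro z₁ z₂ h₁ h₂
  rw [key z₁ h₁, key z₂ h₂]


section Phylo

variable {X : Type} [Fintype X]

lemma acy (T : PhyloTree X) : T.graph.IsAcyclic := T.isTree.2

lemma conn (T : PhyloTree X) : T.graph.Connected := T.isTree.1

lemma mem_side {T : PhyloTree X} {u v : PVert X} {x : X} :
    x ∈ sideOf T u v ↔ (T.graph.deleteEdges {s(u,v)}).Reachable (Sum.inl x) u := Iff.rfl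

lemma mem_side' {T : PhyloTree X} {u v : PVert X} {x : X} :
    x ∈ sideOf T v u ↔ (T.graph.deleteEdges {s(u,v)}).Reachable (Sum.inl x) v := by
  rw [mem_side, Sym2.eq_swap]

lemma side_partition (T : PhyloTree X) {u v : PVert X} (hadj : T.graph.Adj u v) (x : X) :
    x ∈ sideOf T u v ↔ x ∉ sideOf T v u := by
  constructor
  · intro h1 h2
    rw [mem_side] at h1
    rw [mem_side'] at h2
    exact bridge_not_reach (acy T) hadj (Set.mem_singleton _) (h1.symm.trans h2)
  · intro h2
    have hr : T.graph.Reachable (Sum.inl x) u := (conn T).preconnected _ u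
    have hr' : (T.graph.deleteEdges (({s(u,v)} : Set (Sym2 (PVert X))) \ {s(u,v)})).Reachable
        (Sum.inl x) u := by
      rw [Set.diff_self, SimpleGraph.deleteEdges_empty]
      exact hr
    rcases reach_cross T.graph {s(u,v)} u v hr' with h | ⟨h, _⟩ | ⟨h, _⟩
    · exact h
    · exact h
    · exact absurd (mem_side'.mpr h) h2

/-- complement relation of the two sides of an edge -/
lemma side_compl (T : PhyloTree X) {u v : PVert X} (hadj : T.graph.Adj u v) :
    sideOf T v u = (sideOf T u v)ᶜ := by
  ext x
  rw [Set.mem_compl_iff]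
  constructor
  · intro h h2
    exact (side_partition T hadj x).mp h2 h
  · intro h
    exact (side_partition T hadj.symm x).mpr h

lemma internal_three (T : PhyloTree X) (i : Fin (Fintype.card X - 2)) :
    ∃ z₁ z₂ z₃ : PVert X, z₁ ≠ z₂ ∧ z₁ ≠ z₃ ∧ z₂ ≠ z₃ ∧
      T.graph.neighborSet (Sum.inr i) = {z₁, z₂, z₃} :=
  Set.ncard_eq_three.mp (T.internal_deg i)

lemma leaf_nbr (T : PhyloTree X) {x : X} {v : PVert X} (hadj : T.graph.Adj (Sum.inl x) v) :
    T.graph.neighborSet (Sum.inl x) = {v} := by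
  obtain ⟨a, ha⟩ := Set.ncard_eq_one.mp (T.leaf_deg x)
  have : v ∈ T.graph.neighborSet (Sum.inl x) := hadj
  rw [ha] at this ⊢
  rw [Set.mem_singleton_iff] at this
  rw [this]

/-- Main component-analysis tool: in any edge-deleted subgraph, the component of `u`
contains a vertex which is a leaf, or is `u` itself with all incident edges deleted, or
is a vertex with two distinct deleted incident edges. -/
lemma comp_leaf (T : PhyloTree X) (E : Set (Sym2 (PVert X))) (u : PVert X) :
    ∃ w, (T.graph.deleteEdges E).Reachable w u ∧
      ((w = u ∧ ∀ z, T.graph.Adj u z → s(u,z) ∈ E) ∨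
       (w ≠ u ∧ ∃ x, w = Sum.inl x) ∨
       (w ≠ u ∧ ∃ z₁ z₂, z₁ ≠ z₂ ∧ T.graph.Adj w z₁ ∧ T.graph.Adj w z₂ ∧
          s(w,z₁) ∈ E ∧ s(w,z₂) ∈ E)) := by
  rcases maxleaf (acyclic_deleteEdges (acy T) E) u with hall | ⟨w, hne, hr, hsub⟩
  · refine ⟨u, Reachable.refl _, Or.inl ⟨rfl, ?_⟩⟩
    intro z hz
    by_contra hE
    have : (T.graph.deleteEdges E).Adj u z := by
      rw [SimpleGraph.deleteEdges_adj]; exact ⟨hz, hE⟩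
    have := hall z (this.symm.reachable)
    subst this
    exact T.graph.irrefl hz
  · refine ⟨w, hr, ?_⟩
    match w, hne, hr, hsub with
    | Sum.inl x, hne, hr, hsub => exact Or.inr (Or.inl ⟨hne, x, rfl⟩)
    | Sum.inr i, hne, hr, hsub =>
      refine Or.inr (Or.inr ⟨hne, ?_⟩)
      obtain ⟨z₁, z₂, z₃, h12, h13, h23, hset⟩ := internal_three T i
      have hadj : ∀ z ∈ ({z₁, z₂, z₃} : Set (PVert X)), T.graph.Adj (Sum.inr i) z := by
        intro z hz
        rw [← hset] at hz
        exact hz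
      have hclass : ∀ z ∈ ({z₁, z₂, z₃} : Set (PVert X)),
          s(Sum.inr i, z) ∈ E ∨ (T.graph.deleteEdges E).Adj (Sum.inr i) z := by
        intro z hz
        by_cases hE : s(Sum.inr i, z) ∈ E
        · exact Or.inl hE
        · exact Or.inr (by rw [SimpleGraph.deleteEdges_adj]; exact ⟨hadj z hz, hE⟩)
      have m1 : z₁ ∈ ({z₁, z₂, z₃} : Set (PVert X)) := by simp
      have m2 : z₂ ∈ ({z₁, z₂, z₃} : Set (PVert X)) := by simp
      have m3 : z₃ ∈ ({z₁, z₂, z₃} : Set (PVert X)) := by simp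
      rcases hclass z₁ m1 with e1 | d1
      · rcases hclass z₂ m2 with e2 | d2
        · exact ⟨z₁, z₂, h12, hadj _ m1, hadj _ m2, e1, e2⟩
        · rcases hclass z₃ m3 with e3 | d3
          · exact ⟨z₁, z₃, h13, hadj _ m1, hadj _ m3, e1, e3⟩
          · exact absurd (hsub _ _ d2 d3) h23
      · rcases hclass z₂ m2 with e2 | d2
        · rcases hclass z₃ m3 with e3 | d3
          · exact ⟨z₂, z₃, h23, hadj _ m2, hadj _ m3, e2, e3⟩
          · exact absurd (hsub _ _ d1 d3) h13
        · exact absurd (hsub _ _ d1 d2) h12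

lemma side_nonempty (T : PhyloTree X) {u v : PVert X} (hadj : T.graph.Adj u v) :
    ∃ x, x ∈ sideOf T u v := by
  obtain ⟨w, hr, hcase⟩ := comp_leaf T {s(u,v)} u
  rcases hcase with ⟨heq, hall⟩ | ⟨hne, x, rfl⟩ | ⟨hne, z₁, z₂, h12, ha1, ha2, he1, he2⟩
  · clear heq hr
    cases u with
    | inl x => exact ⟨x, mem_side.mpr (Reachable.refl _)⟩
    | inr i =>
      obtain ⟨z₁, z₂, z₃, h12, h13, h23, hset⟩ := internal_three T i
      have hv : ∀ z, z ∈ ({z₁, z₂, z₃} : Set (PVert X)) → z = v := by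
        intro z hz
        rw [← hset] at hz
        have := hall z hz
        rw [Set.mem_singleton_iff, Sym2.congr_right] at this
        exact this
      exact absurd ((hv z₁ (by simp)).trans (hv z₂ (by simp)).symm) h12
  · exact ⟨x, mem_side.mpr hr⟩
  · rw [Set.mem_singleton_iff] at he1 he2
    exact absurd (Sym2.congr_right.mp (he1.trans he2.symm)) h12

end Phylo

section PairSec

variable {X : Type} [Fintype X] (R : PhyloTree X)

/-- elimination of the "far sides facing each other" configuration -/
lemma pair_vv {a b c d : PVert X} (hab : R.graph.Adj a b) (hcd : R.graph.Adj c d)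
    (hPQ : ∀ x, x ∈ sideOf R b a → x ∈ sideOf R d c → False)
    (hdb : (R.graph.deleteEdges {s(a,b), s(c,d)}).Reachable d b) : False := by
  have hmonoe : R.graph.deleteEdges {s(a,b), s(c,d)} ≤ R.graph.deleteEdges {s(a,b)} :=
    SimpleGraph.deleteEdges_anti (by simp)
  have hmonof : R.graph.deleteEdges {s(a,b), s(c,d)} ≤ R.graph.deleteEdges {s(c,d)} :=
    SimpleGraph.deleteEdges_anti (by simp)
  have hbe : ¬ (R.graph.deleteEdges {s(a,b), s(c,d)}).Reachable a b :=
    bridge_not_reach (acy R) hab (by simp)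
  have hbf : ¬ (R.graph.deleteEdges {s(a,b), s(c,d)}).Reachable c d :=
    bridge_not_reach (acy R) hcd (by simp)
  obtain ⟨w, hr, hcase⟩ := comp_leaf R {s(a,b), s(c,d)} d
  rcases hcase with ⟨heq, hall⟩ | ⟨hne, x, rfl⟩ | ⟨hne, z₁, z₂, h12, ha1, ha2, he1, he2⟩
  · clear heq hr
    cases d with
    | inl x =>
      refine hPQ x ?_ ?_
      · exact mem_side'.mpr ((hdb.mono hmonoe))
      · exact mem_side'.mpr (Reachable.refl _)
    | inr i =>
      obtain ⟨z₁, z₂, z₃, h12, h13, h23, hset⟩ := internal_three R i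
      have hz : ∀ z, z ∈ ({z₁, z₂, z₃} : Set (PVert X)) → z = a ∨ z = c := by
        intro z hz
        rw [← hset] at hz
        have hmem := hall z hz
        rcases hmem with hmem | hmem
        · rcases Sym2.eq_iff.mp hmem with ⟨h1, h2⟩ | ⟨h1, h2⟩
          · exfalso
            subst h1
            exact hbe hdb
          · exact Or.inl h2
        · rw [Set.mem_singleton_iff] at hmem
          rcases Sym2.eq_iff.mp hmem with ⟨h1, h2⟩ | ⟨h1, h2⟩
          · exact absurd h1.symm (SimpleGraph.Adj.ne hcd)
          · exact Or.inr h2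
      rcases hz z₁ (by simp) with k1 | k1 <;> rcases hz z₂ (by simp) with k2 | k2 <;>
        rcases hz z₃ (by simp) with k3 | k3 <;>
        first
          | exact absurd (k1.trans k2.symm) h12
          | exact absurd (k1.trans k3.symm) h13
          | exact absurd (k2.trans k3.symm) h23
  · refine hPQ x ?_ ?_
    · exact mem_side'.mpr ((hr.trans hdb).mono hmonoe)
    · exact mem_side'.mpr (hr.mono hmonof)
  · have hdist : s(w, z₁) ≠ s(w, z₂) := fun hh => h12 (Sym2.congr_right.mp hh)
    have hwe : w = a ∨ w = b := by
      rcases he1 with h | h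
      · rcases Sym2.eq_iff.mp h with ⟨h1, _⟩ | ⟨h1, _⟩
        · exact Or.inl h1
        · exact Or.inr h1
      · rcases he2 with h' | h'
        · rcases Sym2.eq_iff.mp h' with ⟨h1, _⟩ | ⟨h1, _⟩
          · exact Or.inl h1
          · exact Or.inr h1
        · rw [Set.mem_singleton_iff] at h h'
          exact absurd (h.trans h'.symm) hdist
    have hwf : w = c ∨ w = d := by
      have he1' := he1
      have he2' := he2
      rcases he1 with h | h
      · rcases he2 with h' | h'
        · exact absurd (h.trans h'.symm) hdist
        · rw [Set.mem_singleton_iff] at h'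
          rcases Sym2.eq_iff.mp h' with ⟨h1, _⟩ | ⟨h1, _⟩
          · exact Or.inl h1
          · exact Or.inr h1
      · rw [Set.mem_singleton_iff] at h
        rcases Sym2.eq_iff.mp h with ⟨h1, _⟩ | ⟨h1, _⟩
        · exact Or.inl h1
        · exact Or.inr h1
    rcases hwe with rfl | rfl
    · exact hbe (hr.trans hdb)
    · rcases hwf with rfl | rfl
      · exact hbf hr
      · exact hne rfl

/-- elimination of the "far side of f inside near side of e" configuration -/
lemma pair_da {a b c d : PVert X} (hab : R.graph.Adj a b) (hcd : R.graph.Adj c d)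
    (hef : s(a,b) ≠ s(c,d))
    (hPQ : ∀ x, x ∈ sideOf R b a → x ∈ sideOf R d c → False)
    (hP : ∃ y, y ∈ sideOf R b a)
    (hda : (R.graph.deleteEdges {s(a,b), s(c,d)}).Reachable d a) : False := by
  have hmonoe : R.graph.deleteEdges {s(a,b), s(c,d)} ≤ R.graph.deleteEdges {s(a,b)} :=
    SimpleGraph.deleteEdges_anti (by simp)
  have hmonof : R.graph.deleteEdges {s(a,b), s(c,d)} ≤ R.graph.deleteEdges {s(c,d)} :=
    SimpleGraph.deleteEdges_anti (by simp)
  obtain ⟨y, hy⟩ := hP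
  have hy' : (R.graph.deleteEdges {s(a,b)}).Reachable (Sum.inl y) b := mem_side'.mp hy
  have hsetEq : ({s(a,b), s(c,d)} : Set (Sym2 (PVert X))) \ {s(c,d)} = {s(a,b)} := by
    ext e
    simp only [Set.mem_diff, Set.mem_insert_iff, Set.mem_singleton_iff]
    constructor
    · rintro ⟨h1 | h1, h2⟩
      · exact h1
      · exact absurd h1 h2
    · intro h1
      exact ⟨Or.inl h1, fun hh => hef (h1 ▸ hh ▸ rfl)⟩
  have hy'' : (R.graph.deleteEdges (({s(a,b), s(c,d)} : Set (Sym2 (PVert X))) \ {s(c,d)})).Reachable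
      (Sum.inl y) b := by rw [hsetEq]; exact hy'
  rcases reach_cross R.graph {s(a,b), s(c,d)} c d hy'' with h | ⟨h1, h2⟩ | ⟨h1, h2⟩
  · -- y reaches b avoiding both; but b reaches d avoiding f
    have hbd : (R.graph.deleteEdges {s(c,d)}).Reachable b d := by
      have hba : (R.graph.deleteEdges {s(c,d)}).Adj b a := by
        rw [SimpleGraph.deleteEdges_adj]
        refine ⟨hab.symm, ?_⟩
        rw [Set.mem_singleton_iff, Sym2.eq_swap]
        exact hef
      exact (hba.reachable).trans ((hda.symm).mono hmonof)
    exact hPQ y hy (mem_side'.mpr ((h.mono hmonof).trans hbd))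
  · exact pair_vv R hab hcd hPQ h2
  · exact hPQ y hy (mem_side'.mpr (h1.mono hmonof))

/-- two edges whose far sides are disjoint have their near endpoints in a common
component after deleting both edges -/
lemma pair {a b c d : PVert X} (hab : R.graph.Adj a b) (hcd : R.graph.Adj c d)
    (hef : s(a,b) ≠ s(c,d))
    (hPQ : ∀ x, x ∈ sideOf R b a → x ∈ sideOf R d c → False) :
    (R.graph.deleteEdges {s(a,b), s(c,d)}).Reachable a c := by
  have hP : ∃ y, y ∈ sideOf R b a := side_nonempty R hab.symm
  have hQ : ∃ y, y ∈ sideOf R d c := side_nonempty R hcd.symm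
  have hbe : ¬ (R.graph.deleteEdges {s(a,b), s(c,d)}).Reachable a b :=
    bridge_not_reach (acy R) hab (by simp)
  have hbf : ¬ (R.graph.deleteEdges {s(a,b), s(c,d)}).Reachable c d :=
    bridge_not_reach (acy R) hcd (by simp)
  have hca0 : R.graph.Reachable c a := (conn R).preconnected c a
  have hca0' : (R.graph.deleteEdges (({s(a,b)} : Set (Sym2 (PVert X))) \ {s(a,b)})).Reachable
      c a := by rw [Set.diff_self, SimpleGraph.deleteEdges_empty]; exact hca0
  have step1 : (R.graph.deleteEdges {s(a,b)}).Reachable c a ∨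
      (R.graph.deleteEdges {s(a,b)}).Reachable c b := by
    rcases reach_cross R.graph {s(a,b)} a b hca0' with h | ⟨h1, h2⟩ | ⟨h1, h2⟩
    · exact Or.inl h
    · exact Or.inl h1
    · exact Or.inr h1
  have hsetEq : ({s(a,b), s(c,d)} : Set (Sym2 (PVert X))) \ {s(c,d)} = {s(a,b)} := by
    ext e
    simp only [Set.mem_diff, Set.mem_insert_iff, Set.mem_singleton_iff]
    constructor
    · rintro ⟨h1 | h1, h2⟩
      · exact h1
      · exact absurd h1 h2
    · intro h1
      exact ⟨Or.inl h1, fun hh => hef (h1 ▸ hh ▸ rfl)⟩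
  have step2 : ∀ t, (R.graph.deleteEdges {s(a,b)}).Reachable c t →
      (R.graph.deleteEdges {s(a,b), s(c,d)}).Reachable c t ∨
      (R.graph.deleteEdges {s(a,b), s(c,d)}).Reachable d t := by
    intro t ht
    have ht' : (R.graph.deleteEdges (({s(a,b), s(c,d)} : Set (Sym2 (PVert X))) \
        {s(c,d)})).Reachable c t := by rw [hsetEq]; exact ht
    rcases reach_cross R.graph {s(a,b), s(c,d)} c d ht' with h | ⟨h1, h2⟩ | ⟨h1, h2⟩
    · exact Or.inl h
    · exact Or.inr h2
    · exact absurd h1 hbf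
  have hpaircomm : ({s(c,d), s(a,b)} : Set (Sym2 (PVert X))) = {s(a,b), s(c,d)} :=
    Set.pair_comm _ _
  rcases step1 with h | h
  · rcases step2 a h with h' | h'
    · exact h'.symm
    · exact absurd h' (fun hh => pair_da R hab hcd hef hPQ hP hh)
  · rcases step2 b h with h' | h'
    · exfalso
      refine pair_da R hcd hab (Ne.symm hef) (fun x hx1 hx2 => hPQ x hx2 hx1) hQ ?_
      rw [hpaircomm]
      exact h'.symm
    · exact absurd h' (fun hh => pair_vv R hab hcd hPQ hh)

end PairSec

section UniqSec

variable {X : Type} [Fintype X] (R : PhyloTree X)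

/-- an oriented side determines the oriented edge -/
lemma uniq {p q p' q' : PVert X} (hpq : R.graph.Adj p q) (hpq' : R.graph.Adj p' q')
    (hs : sideOf R p q = sideOf R p' q') : p = p' ∧ q = q' := by
  by_cases hef : s(p,q) = s(p',q')
  · rcases Sym2.eq_iff.mp hef with ⟨h1, h2⟩ | ⟨h1, h2⟩
    · exact ⟨h1, h2⟩
    · exfalso
      rw [← h1, ← h2] at hs
      obtain ⟨x, hx⟩ := side_nonempty R hpq
      have hx2 : x ∈ sideOf R q p := by rw [← hs]; exact hx
      exact (side_partition R hpq x).mp hx hx2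
  · exfalso
    have hd1 : ∀ x, x ∈ sideOf R q p → x ∈ sideOf R p' q' → False := by
      intro x h1 h2
      rw [← hs] at h2
      exact (side_partition R hpq.symm x).mp h1 h2
    have hd2 : ∀ x, x ∈ sideOf R p q → x ∈ sideOf R q' p' → False := by
      intro x h1 h2
      rw [hs] at h1
      exact (side_partition R hpq'.symm x).mp h2 h1
    have hswap' : s(q',p') = s(p',q') := Sym2.eq_swap
    have hswap : s(q,p) = s(p,q) := Sym2.eq_swap
    have pair1 : (R.graph.deleteEdges {s(p,q), s(q',p')}).Reachable p q' := by
      refine pair R hpq hpq'.symm ?_ ?_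
      · rw [hswap']; exact hef
      · intro x h1 h2
        exact hd1 x h1 h2
    have pair2 : (R.graph.deleteEdges {s(q,p), s(p',q')}).Reachable q p' := by
      refine pair R hpq.symm hpq' ?_ ?_
      · rw [hswap]; exact hef
      · intro x h1 h2
        exact hd2 x h1 h2
    rw [hswap'] at pair1
    rw [hswap] at pair2
    have hmono : R.graph.deleteEdges {s(p,q), s(p',q')} ≤ R.graph.deleteEdges {s(p,q)} :=
      SimpleGraph.deleteEdges_anti (by simp)
    have hedge : (R.graph.deleteEdges {s(p,q)}).Adj q' p' := by
      rw [SimpleGraph.deleteEdges_adj]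
      refine ⟨hpq'.symm, ?_⟩
      rw [Set.mem_singleton_iff, hswap']
      exact fun hh => hef hh.symm
    exact bridge_not_reach (acy R) hpq (Set.mem_singleton _)
      ((pair1.mono hmono).trans ((hedge.reachable).trans (pair2.mono hmono).symm))

end UniqSec

section ShareSec

variable {X : Type} [Fintype X]

lemma pair_diff_right {A : Type} {a b : A} (h : a ≠ b) : ({a, b} : Set A) \ {b} = {a} := by
  ext x
  simp only [Set.mem_diff, Set.mem_insert_iff, Set.mem_singleton_iff]
  constructor
  · rintro ⟨h1 | h1, h2⟩
    · exact h1
    · exact absurd h1 h2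
  · intro h1
    exact ⟨Or.inl h1, fun hh => h ((h1.symm.trans hh))⟩

lemma pair_diff_left {A : Type} {a b : A} (h : a ≠ b) : ({a, b} : Set A) \ {a} = {b} := by
  ext x
  simp only [Set.mem_diff, Set.mem_insert_iff, Set.mem_singleton_iff]
  constructor
  · rintro ⟨h1 | h1, h2⟩
    · exact absurd h1 h2
    · exact h1
  · intro h1
    exact ⟨Or.inr h1, fun hh => h (hh.symm.trans h1)⟩

lemma pigeon2 {A : Type} {z₁ z₂ z₃ α β : A} (h12 : z₁ ≠ z₂) (h13 : z₁ ≠ z₃) (h23 : z₂ ≠ z₃)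
    (e1 : z₁ = α ∨ z₁ = β) (e2 : z₂ = α ∨ z₂ = β) (e3 : z₃ = α ∨ z₃ = β) : False := by
  rcases e1 with rfl | rfl <;> rcases e2 with h | h <;> rcases e3 with h' | h' <;> simp_all

/-- two distinct sides at the same vertex are disjoint -/
lemma side_disj (T : PhyloTree X) {u v w : PVert X} (hvw : v ≠ w) (hv : T.graph.Adj u v)
    (hw : T.graph.Adj u w) : ∀ x, x ∈ sideOf T v u → x ∈ sideOf T w u → False := by
  intro x h1 h2
  rw [mem_side'] at h1 h2
  have hne : s(u,v) ≠ s(u,w) := fun hh => hvw (Sym2.congr_right.mp hh)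
  have hE1 : ({s(u,v), s(u,w)} : Set (Sym2 (PVert X))) \ {s(u,w)} = {s(u,v)} :=
    pair_diff_right hne
  have hE2 : ({s(u,v), s(u,w)} : Set (Sym2 (PVert X))) \ {s(u,v)} = {s(u,w)} :=
    pair_diff_left hne
  have hmono1 : T.graph.deleteEdges {s(u,v), s(u,w)} ≤ T.graph.deleteEdges {s(u,v)} :=
    SimpleGraph.deleteEdges_anti (by simp)
  have hbv : ¬ (T.graph.deleteEdges {s(u,v), s(u,w)}).Reachable u v :=
    bridge_not_reach (acy T) hv (by simp)
  have hbw : ¬ (T.graph.deleteEdges {s(u,v), s(u,w)}).Reachable u w :=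
    bridge_not_reach (acy T) hw (by simp)
  have h1' : (T.graph.deleteEdges (({s(u,v), s(u,w)} : Set (Sym2 (PVert X))) \
      {s(u,w)})).Reachable (Sum.inl x) v := by rw [hE1]; exact h1
  have h2' : (T.graph.deleteEdges (({s(u,v), s(u,w)} : Set (Sym2 (PVert X))) \
      {s(u,v)})).Reachable (Sum.inl x) w := by rw [hE2]; exact h2
  have hfin : (T.graph.deleteEdges {s(u,v), s(u,w)}).Reachable w v := by
    rcases reach_cross T.graph {s(u,v), s(u,w)} u w h1' with c1 | ⟨c1, c2⟩ | ⟨c1, c2⟩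
    · rcases reach_cross T.graph {s(u,v), s(u,w)} u v h2' with d1 | ⟨d1, d2⟩ | ⟨d1, d2⟩
      · exact d1.symm.trans c1
      · exact d2.symm
      · exact absurd d2 hbw
    · exact c2
    · exact absurd c2 hbv
  have hedge : (T.graph.deleteEdges {s(u,v)}).Adj u w := by
    rw [SimpleGraph.deleteEdges_adj]
    exact ⟨hw, by rw [Set.mem_singleton_iff]; exact fun hh => hne hh.symm⟩
  exact bridge_not_reach (acy T) hv (Set.mem_singleton _)
    ((hedge.reachable).trans (hfin.mono hmono1))

/-- the three sides at an internal vertex cover all leaves -/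
lemma partition3 (T : PhyloTree X) {u : PVert X} (hui : ∀ x : X, u ≠ Sum.inl x)
    {v₁ v₂ v₃ : PVert X} (hset : T.graph.neighborSet u = {v₁, v₂, v₃}) (x : X) :
    x ∈ sideOf T v₁ u ∨ x ∈ sideOf T v₂ u ∨ x ∈ sideOf T v₃ u := by
  obtain ⟨z, hz, hcase⟩ := reach_dichot T.graph {s(u,v₁), s(u,v₂), s(u,v₃)}
    ((conn T).preconnected (Sum.inl x) u)
  have hiso : ∀ z', ¬ (T.graph.deleteEdges {s(u,v₁), s(u,v₂), s(u,v₃)}).Adj u z' := by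
    intro z' hz'
    rw [SimpleGraph.deleteEdges_adj] at hz'
    have hmem : z' ∈ T.graph.neighborSet u := hz'.1
    rw [hset] at hmem
    apply hz'.2
    rcases hmem with rfl | hmem
    · simp
    · rcases hmem with rfl | rfl <;> simp
  have hzu : z = u → False := by
    intro hzu
    subst hzu
    exact hui x (reach_isolated hiso hz).symm
  rcases hcase with hcz | ⟨e, he, hze⟩
  · exact absurd hcz hzu
  · rcases he with rfl | he
    · rcases Sym2.mem_iff.mp hze with rfl | rfl
      · exact absurd rfl hzu
      · exact Or.inl (mem_side'.mpr (hz.mono (SimpleGraph.deleteEdges_anti (by simp))))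
    · rcases he with rfl | he
      · rcases Sym2.mem_iff.mp hze with rfl | rfl
        · exact absurd rfl hzu
        · exact Or.inr (Or.inl (mem_side'.mpr (hz.mono (SimpleGraph.deleteEdges_anti (by simp)))))
      · rw [Set.mem_singleton_iff] at he
        subst he
        rcases Sym2.mem_iff.mp hze with rfl | rfl
        · exact absurd rfl hzu
        · exact Or.inr (Or.inr (mem_side'.mpr (hz.mono (SimpleGraph.deleteEdges_anti (by simp)))))

end ShareSec

section Share3

variable {X : Type} [Fintype X]

lemma edge_mem_three {A : Type} {e f₁ f₂ f₃ : A} (h : e ∈ ({f₁, f₂, f₃} : Set A)) :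
    e = f₁ ∨ e = f₂ ∨ e = f₃ := by
  rcases h with rfl | h
  · exact Or.inl rfl
  · rcases h with rfl | h
    · exact Or.inr (Or.inl rfl)
    · rw [Set.mem_singleton_iff] at h
      exact Or.inr (Or.inr h)

lemma share3 (T R : PhyloTree X) {u : PVert X} (hui : ∀ x : X, u ≠ Sum.inl x)
    {v₁ v₂ v₃ : PVert X} (h12 : v₁ ≠ v₂) (h13 : v₁ ≠ v₃) (h23 : v₂ ≠ v₃)
    (hset : T.graph.neighborSet u = {v₁, v₂, v₃})
    {p₁ q₁ p₂ q₂ p₃ q₃ : PVert X}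
    (ha1 : R.graph.Adj p₁ q₁) (ha2 : R.graph.Adj p₂ q₂) (ha3 : R.graph.Adj p₃ q₃)
    (hs1 : sideOf R p₁ q₁ = sideOf T u v₁)
    (hs2 : sideOf R p₂ q₂ = sideOf T u v₂)
    (hs3 : sideOf R p₃ q₃ = sideOf T u v₃) : p₁ = p₂ := by
  have hadj1 : T.graph.Adj u v₁ := by
    have : v₁ ∈ T.graph.neighborSet u := by rw [hset]; simp
    exact this
  have hadj2 : T.graph.Adj u v₂ := by
    have : v₂ ∈ T.graph.neighborSet u := by rw [hset]; simp
    exact this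
  have hadj3 : T.graph.Adj u v₃ := by
    have : v₃ ∈ T.graph.neighborSet u := by rw [hset]; simp
    exact this
  -- far side of the R edges
  have hfar1 : ∀ x : X, x ∈ sideOf R q₁ p₁ ↔ x ∈ sideOf T v₁ u := by
    intro x
    rw [side_compl R ha1, Set.mem_compl_iff, hs1, side_compl T hadj1, Set.mem_compl_iff]
  have hfar2 : ∀ x : X, x ∈ sideOf R q₂ p₂ ↔ x ∈ sideOf T v₂ u := by
    intro x
    rw [side_compl R ha2, Set.mem_compl_iff, hs2, side_compl T hadj2, Set.mem_compl_iff]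
  have hfar3 : ∀ x : X, x ∈ sideOf R q₃ p₃ ↔ x ∈ sideOf T v₃ u := by
    intro x
    rw [side_compl R ha3, Set.mem_compl_iff, hs3, side_compl T hadj3, Set.mem_compl_iff]
  -- the three deleted edges are distinct
  have hB1 := side_nonempty T hadj1.symm
  have hB2 := side_nonempty T hadj2.symm
  have hB3 := side_nonempty T hadj3.symm
  have hdisj12 := side_disj T h12 hadj1 hadj2
  have hdisj13 := side_disj T h13 hadj1 hadj3
  have hdisj23 := side_disj T h23 hadj2 hadj3
  have hedist : ∀ (a b c d : PVert X), R.graph.Adj a b → R.graph.Adj c d →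
      (∀ x : X, x ∈ sideOf R b a ↔ x ∈ sideOf T v₁ u) →
      (∀ x : X, x ∈ sideOf R d c ↔ x ∈ sideOf T v₂ u) → s(a,b) ≠ s(c,d) → True := fun _ _ _ _ _ _ _ _ _ => trivial
  have hef12 : s(p₁,q₁) ≠ s(p₂,q₂) := by
    intro hh
    rcases Sym2.eq_iff.mp hh with ⟨he1, he2⟩ | ⟨he1, he2⟩
    · obtain ⟨x, hx⟩ := hB1
      refine hdisj12 x hx ?_
      rw [← hfar2 x, ← he1, ← he2, hfar1 x]
      exact hx
    · -- p₁ = q₂, q₁ = p₂ : far side of edge2 is near side of edge1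
      have key : ∀ x, x ∈ sideOf T u v₁ ↔ x ∈ sideOf T v₂ u := by
        intro x
        rw [← hs1, ← hfar2 x, he1, he2]
      obtain ⟨x, hx⟩ := hB3
      have hxA1 : x ∈ sideOf T u v₁ :=
        (side_partition T hadj1 x).mpr (fun hc => hdisj13 x hc hx)
      exact hdisj23 x ((key x).mp hxA1) hx
  have hef13 : s(p₁,q₁) ≠ s(p₃,q₃) := by
    intro hh
    rcases Sym2.eq_iff.mp hh with ⟨he1, he2⟩ | ⟨he1, he2⟩
    · obtain ⟨x, hx⟩ := hB1
      refine hdisj13 x hx ?_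
      rw [← hfar3 x, ← he1, ← he2, hfar1 x]
      exact hx
    · have key : ∀ x, x ∈ sideOf T u v₁ ↔ x ∈ sideOf T v₃ u := by
        intro x
        rw [← hs1, ← hfar3 x, he1, he2]
      obtain ⟨x, hx⟩ := hB2
      have hxA1 : x ∈ sideOf T u v₁ :=
        (side_partition T hadj1 x).mpr (fun hc => hdisj12 x hc hx)
      exact hdisj23 x hx ((key x).mp hxA1)
  have hef23 : s(p₂,q₂) ≠ s(p₃,q₃) := by
    intro hh
    rcases Sym2.eq_iff.mp hh with ⟨he1, he2⟩ | ⟨he1, he2⟩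
    · obtain ⟨x, hx⟩ := hB2
      refine hdisj23 x hx ?_
      rw [← hfar3 x, ← he1, ← he2, hfar2 x]
      exact hx
    · have key : ∀ x, x ∈ sideOf T u v₂ ↔ x ∈ sideOf T v₃ u := by
        intro x
        rw [← hs2, ← hfar3 x, he1, he2]
      obtain ⟨x, hx⟩ := hB1
      have hxA2 : x ∈ sideOf T u v₂ :=
        (side_partition T hadj2 x).mpr (fun hc => hdisj12 x hx hc)
      exact hdisj13 x hx ((key x).mp hxA2)
  -- pair lemma applications
  have D12 : (R.graph.deleteEdges {s(p₁,q₁), s(p₂,q₂)}).Reachable p₁ p₂ := by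
    refine pair R ha1 ha2 hef12 ?_
    intro x hx1 hx2
    exact hdisj12 x ((hfar1 x).mp hx1) ((hfar2 x).mp hx2)
  have D13 : (R.graph.deleteEdges {s(p₁,q₁), s(p₃,q₃)}).Reachable p₁ p₃ := by
    refine pair R ha1 ha3 hef13 ?_
    intro x hx1 hx2
    exact hdisj13 x ((hfar1 x).mp hx1) ((hfar3 x).mp hx2)
  by_contra hne
  -- work in the graph with all three edges deleted
  set E : Set (Sym2 (PVert X)) := {s(p₁,q₁), s(p₂,q₂), s(p₃,q₃)} with hEdef
  have hsub1 : ({s(p₁,q₁)} : Set (Sym2 (PVert X))) ⊆ E := by rw [hEdef]; intro e he; rw [Set.mem_singleton_iff] at he; simp [he]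
  have hsub2 : ({s(p₂,q₂)} : Set (Sym2 (PVert X))) ⊆ E := by rw [hEdef]; intro e he; rw [Set.mem_singleton_iff] at he; simp [he]
  have hsub3 : ({s(p₃,q₃)} : Set (Sym2 (PVert X))) ⊆ E := by rw [hEdef]; intro e he; rw [Set.mem_singleton_iff] at he; simp [he]
  have hsub12 : ({s(p₁,q₁), s(p₂,q₂)} : Set (Sym2 (PVert X))) ⊆ E := by
    rw [hEdef]; intro e he; rcases he with h | h
    · simp [h]
    · rw [Set.mem_singleton_iff] at h; simp [h]
  have hsub13 : ({s(p₁,q₁), s(p₃,q₃)} : Set (Sym2 (PVert X))) ⊆ E := by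
    rw [hEdef]; intro e he; rcases he with h | h
    · simp [h]
    · rw [Set.mem_singleton_iff] at h; simp [h]
  have hm1 := SimpleGraph.deleteEdges_anti (G := R.graph) hsub1
  have hm2 := SimpleGraph.deleteEdges_anti (G := R.graph) hsub2
  have hm3 := SimpleGraph.deleteEdges_anti (G := R.graph) hsub3
  have hm12 := SimpleGraph.deleteEdges_anti (G := R.graph) hsub12
  have hm13 := SimpleGraph.deleteEdges_anti (G := R.graph) hsub13
  -- no leaf is in the component of p₁
  have CL : ∀ (y : X) (w : PVert X), w = Sum.inl y →
      (R.graph.deleteEdges E).Reachable w p₁ → False := by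
    rintro y w rfl hw
    have hy1 : y ∈ sideOf T u v₁ := by rw [← hs1]; exact mem_side.mpr (hw.mono hm1)
    have hy2 : y ∈ sideOf T u v₂ := by
      rw [← hs2]
      exact mem_side.mpr (((hw.mono hm12).trans D12).mono
        (SimpleGraph.deleteEdges_anti (by simp)))
    have hy3 : y ∈ sideOf T u v₃ := by
      rw [← hs3]
      exact mem_side.mpr (((hw.mono hm13).trans D13).mono
        (SimpleGraph.deleteEdges_anti (by simp)))
    rcases partition3 T hui hset y with h | h | h
    · exact (side_partition T hadj1 y).mp hy1 h
    · exact (side_partition T hadj2 y).mp hy2 h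
    · exact (side_partition T hadj3 y).mp hy3 h
  -- exclusions of the far endpoints from the component of p₁
  have hnq1 : ∀ w, (R.graph.deleteEdges E).Reachable w p₁ → w = q₁ → False := by
    rintro w hw rfl
    exact bridge_not_reach (acy R) ha1.symm
      (by rw [Sym2.eq_swap]; exact Set.mem_singleton _) (hw.mono hm1)
  have hnq2 : ∀ w, (R.graph.deleteEdges E).Reachable w p₁ → w = q₂ → False := by
    rintro w hw rfl
    exact bridge_not_reach (acy R) ha2.symm
      (by rw [Sym2.eq_swap]; exact Set.mem_singleton _)
      (((hw.mono hm12).trans D12).mono (SimpleGraph.deleteEdges_anti (by simp)))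
  have hnq3 : ∀ w, (R.graph.deleteEdges E).Reachable w p₁ → w = q₃ → False := by
    rintro w hw rfl
    exact bridge_not_reach (acy R) ha3.symm
      (by rw [Sym2.eq_swap]; exact Set.mem_singleton _)
      (((hw.mono hm13).trans D13).mono (SimpleGraph.deleteEdges_anti (by simp)))
  -- location of deleted edges incident to a vertex in the component of p₁
  have loc : ∀ w z, (R.graph.deleteEdges E).Reachable w p₁ → w ≠ p₁ → s(w,z) ∈ E →
      (w = p₂ ∧ z = q₂) ∨ (w = p₃ ∧ z = q₃) := by
    intro w z hw hwne hmem
    rw [hEdef] at hmem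
    rcases edge_mem_three hmem with h | h | h
    · rcases Sym2.eq_iff.mp h with ⟨h1, h2⟩ | ⟨h1, h2⟩
      · exact absurd h1 hwne
      · exact absurd (hnq1 w hw h1) id
    · rcases Sym2.eq_iff.mp h with ⟨h1, h2⟩ | ⟨h1, h2⟩
      · exact Or.inl ⟨h1, h2⟩
      · exact absurd (hnq2 w hw h1) id
    · rcases Sym2.eq_iff.mp h with ⟨h1, h2⟩ | ⟨h1, h2⟩
      · exact Or.inr ⟨h1, h2⟩
      · exact absurd (hnq3 w hw h1) id
  have locp1 : ∀ z, s(p₁,z) ∈ E → z = q₁ ∨ (p₁ = p₃ ∧ z = q₃) := by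
    intro z hmem
    rw [hEdef] at hmem
    rcases edge_mem_three hmem with h | h | h
    · rcases Sym2.eq_iff.mp h with ⟨h1, h2⟩ | ⟨h1, h2⟩
      · exact Or.inl h2
      · exact absurd (hnq1 p₁ (Reachable.refl _) h1) id
    · rcases Sym2.eq_iff.mp h with ⟨h1, h2⟩ | ⟨h1, h2⟩
      · exact absurd h1 hne
      · exact absurd (hnq2 p₁ (Reachable.refl _) h1) id
    · rcases Sym2.eq_iff.mp h with ⟨h1, h2⟩ | ⟨h1, h2⟩
      · exact Or.inr ⟨h1, h2⟩
      · exact absurd (hnq3 p₁ (Reachable.refl _) h1) id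
  obtain ⟨w, hr, hcase⟩ := comp_leaf R E p₁
  rcases hcase with ⟨heq, hall⟩ | ⟨hnew, y, rfl⟩ | ⟨hnew, z₁, z₂, hz12, haz1, haz2, hez1, hez2⟩
  · -- all edges at p₁ are deleted
    clear heq hr
    cases p₁ with
    | inl y => exact CL y _ rfl (Reachable.refl _)
    | inr i =>
      obtain ⟨t₁, t₂, t₃, g12, g13, g23, gset⟩ := internal_three R i
      have ht : ∀ z, z ∈ ({t₁, t₂, t₃} : Set (PVert X)) → z = q₁ ∨ z = q₃ := by
        intro z hzm
        rw [← gset] at hzm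
        rcases locp1 z (hall z hzm) with h | ⟨_, h⟩
        · exact Or.inl h
        · exact Or.inr h
      exact pigeon2 g12 g13 g23 (ht t₁ (by simp)) (ht t₂ (by simp)) (ht t₃ (by simp))
  · exact CL y _ rfl hr
  · have main : w = p₂ → w = p₃ → False := by
      intro hw2 hw3
      obtain ⟨w', hr', hcase'⟩ := comp_leaf R E w
      rcases hcase' with ⟨heq', hall'⟩ | ⟨hnew', y, rfl⟩ | ⟨hnew', y₁, y₂, hy12, hay1, hay2, hey1, hey2⟩
      · -- all edges at w are deleted
        clear heq' hr'
        cases w with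
        | inl y => exact CL y _ rfl hr
        | inr i =>
          obtain ⟨t₁, t₂, t₃, g12, g13, g23, gset⟩ := internal_three R i
          have ht : ∀ z, z ∈ ({t₁, t₂, t₃} : Set (PVert X)) → z = q₂ ∨ z = q₃ := by
            intro z hzm
            rw [← gset] at hzm
            rcases loc _ z hr hnew (hall' z hzm) with ⟨_, h⟩ | ⟨_, h⟩
            · exact Or.inl h
            · exact Or.inr h
          exact pigeon2 g12 g13 g23 (ht t₁ (by simp)) (ht t₂ (by simp)) (ht t₃ (by simp))
      · exact CL y _ rfl (hr'.trans hr)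
      · have hrw' : (R.graph.deleteEdges E).Reachable w' p₁ := hr'.trans hr
        by_cases hwp1 : w' = p₁
        · -- w' = p₁ : only the first edge is deleted at p₁
          have k1 : y₁ = q₁ := by
            rcases locp1 y₁ (by rw [← hwp1]; exact hey1) with h | ⟨h, _⟩
            · exact h
            · exact absurd (hw3 ▸ h.symm : w = p₁) hnew
          have k2 : y₂ = q₁ := by
            rcases locp1 y₂ (by rw [← hwp1]; exact hey2) with h | ⟨h, _⟩
            · exact h
            · exact absurd (hw3 ▸ h.symm : w = p₁) hnew
          exact hy12 (k1.trans k2.symm)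
        · rcases loc w' y₁ hrw' hwp1 hey1 with ⟨ka, kb⟩ | ⟨ka, kb⟩ <;>
            rcases loc w' y₂ hrw' hwp1 hey2 with ⟨kc, kd⟩ | ⟨kc, kd⟩
          · exact hy12 (kb.trans kd.symm)
          · exact hnew' (ka.trans hw2.symm)
          · exact hnew' (ka.trans hw3.symm)
          · exact hy12 (kb.trans kd.symm)
    rcases loc w z₁ hr hnew hez1 with ⟨ka, kb⟩ | ⟨ka, kb⟩ <;>
      rcases loc w z₂ hr hnew hez2 with ⟨kc, kd⟩ | ⟨kc, kd⟩
    · exact hz12 (kb.trans kd.symm)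
    · exact main ka kc
    · exact main kc ka
    · exact hz12 (kb.trans kd.symm)

end Share3

section Final

variable {X : Type} [Fintype X]

lemma exists_nbr (T : PhyloTree X) (u : PVert X) : ∃ v, T.graph.Adj u v := by
  cases u with
  | inl x =>
    obtain ⟨v, hv⟩ := Set.nonempty_of_ncard_ne_zero
      (by rw [T.leaf_deg x]; exact one_ne_zero :
        (T.graph.neighborSet (Sum.inl x)).ncard ≠ 0)
    exact ⟨v, hv⟩
  | inr i =>
    obtain ⟨v, hv⟩ := Set.nonempty_of_ncard_ne_zero
      (by rw [T.internal_deg i]; exact three_ne_zero :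
        (T.graph.neighborSet (Sum.inr i)).ncard ≠ 0)
    exact ⟨v, hv⟩

lemma side_of_leaf (T : PhyloTree X) {x : X} {v : PVert X} (hadj : T.graph.Adj (Sum.inl x) v) :
    sideOf T (Sum.inl x) v = {x} := by
  ext y
  rw [Set.mem_singleton_iff]
  constructor
  · intro hy
    rw [mem_side] at hy
    obtain ⟨p⟩ := hy.symm
    cases p with
    | nil => rfl
    | @cons _ z _ hadj' p' =>
      exfalso
      rw [SimpleGraph.deleteEdges_adj] at hadj'
      have hz : z ∈ T.graph.neighborSet (Sum.inl x) := hadj'.1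
      rw [leaf_nbr T hadj, Set.mem_singleton_iff] at hz
      subst hz
      exact hadj'.2 rfl
  · rintro rfl
    exact mem_side.mpr (Reachable.refl _)

lemma eq_leaf_of_side (R : PhyloTree X) {p q : PVert X} (hadj : R.graph.Adj p q) (x : X)
    (hs : sideOf R p q = {x}) : p = Sum.inl x := by
  by_contra hne
  have hxp : (R.graph.deleteEdges {s(p,q)}).Reachable (Sum.inl x) p := by
    rw [← mem_side (T := R)]
    rw [hs]
    rfl
  obtain ⟨w, hr, hcase⟩ := comp_leaf R {s(p,q)} (Sum.inl x)
  rcases hcase with ⟨heq, hall⟩ | ⟨hnew, y, rfl⟩ | ⟨hnew, z₁, z₂, h12, _, _, he1, he2⟩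
  · obtain ⟨pw⟩ := hxp
    cases pw with
    | nil => exact hne rfl
    | @cons _ z _ hadj' p' =>
      rw [SimpleGraph.deleteEdges_adj] at hadj'
      exact hadj'.2 (hall z hadj'.1)
  · have hy : y ∈ sideOf R p q := mem_side.mpr (hr.trans hxp)
    rw [hs, Set.mem_singleton_iff] at hy
    exact hnew (by rw [hy])
  · rw [Set.mem_singleton_iff] at he1 he2
    exact h12 (Sym2.congr_right.mp (he1.trans he2.symm))

lemma third_of_mem {A : Type} {z₁ z₂ z₃ a b : A} (g12 : z₁ ≠ z₂) (g13 : z₁ ≠ z₃)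
    (g23 : z₂ ≠ z₃) (hab : a ≠ b) (ha : a = z₁ ∨ a = z₂ ∨ a = z₃)
    (hb : b = z₁ ∨ b = z₂ ∨ b = z₃) :
    ∃ w, a ≠ w ∧ b ≠ w ∧ ({z₁, z₂, z₃} : Set A) = {a, b, w} := by
  have hperm : ∀ x y z : A, ({z₁, z₂, z₃} : Set A) = {x, y, z} →
      ({z₁, z₂, z₃} : Set A) = {x, y, z} := fun _ _ _ hh => hh
  rcases ha with rfl | rfl | rfl
  · rcases hb with rfl | rfl | rfl
    · exact absurd rfl hab
    · exact ⟨z₃, g13, g23, by ext t; simp only [Set.mem_insert_iff, Set.mem_singleton_iff]; try tauto⟩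
    · exact ⟨z₂, g12, g23.symm, by ext t; simp only [Set.mem_insert_iff, Set.mem_singleton_iff]; try tauto⟩
  · rcases hb with rfl | rfl | rfl
    · exact ⟨z₃, g23, g13, by ext t; simp only [Set.mem_insert_iff, Set.mem_singleton_iff]; try tauto⟩
    · exact absurd rfl hab
    · exact ⟨z₁, g12.symm, g13.symm, by ext t; simp only [Set.mem_insert_iff, Set.mem_singleton_iff]; try tauto⟩
  · rcases hb with rfl | rfl | rfl
    · exact ⟨z₂, g23.symm, g12, by ext t; simp only [Set.mem_insert_iff, Set.mem_singleton_iff]; try tauto⟩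
    · exact ⟨z₁, g13.symm, g12.symm, by ext t; simp only [Set.mem_insert_iff, Set.mem_singleton_iff]; try tauto⟩
    · exact absurd rfl hab

lemma key (T R : PhyloTree X)
    (h : ∀ u v, T.graph.Adj u v → ∃ p q, R.graph.Adj p q ∧ sideOf R p q = sideOf T u v) :
    ∃ φ : PVert X → PVert X, (∀ x : X, φ (Sum.inl x) = Sum.inl x) ∧
      (∀ u v p q, T.graph.Adj u v → R.graph.Adj p q → sideOf R p q = sideOf T u v →
        φ u = p) := by
  have hnbr := exists_nbr T
  choose n hn using hnbr
  have hch : ∀ u : PVert X, ∃ pq : PVert X × PVert X,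
      R.graph.Adj pq.1 pq.2 ∧ sideOf R pq.1 pq.2 = sideOf T u (n u) := by
    intro u
    obtain ⟨p, q, h1, h2⟩ := h u (n u) (hn u)
    exact ⟨(p, q), h1, h2⟩
  choose c hc1 hc2 using hch
  have prop2 : ∀ u v p q, T.graph.Adj u v → R.graph.Adj p q →
      sideOf R p q = sideOf T u v → (c u).1 = p := by
    intro u v p q huv hpq hside
    by_cases hv : v = n u
    · subst hv
      exact (uniq R hpq (hc1 u) (hside.trans (hc2 u).symm)).1.symm
    · cases u with
      | inl x =>
        exfalso
        have h1 : n (Sum.inl x) ∈ T.graph.neighborSet (Sum.inl x) := hn (Sum.inl x)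
        rw [leaf_nbr T huv, Set.mem_singleton_iff] at h1
        exact hv h1.symm
      | inr i =>
        obtain ⟨z₁, z₂, z₃, g12, g13, g23, gset⟩ := internal_three T i
        have hvm : v = z₁ ∨ v = z₂ ∨ v = z₃ := by
          have : v ∈ T.graph.neighborSet (Sum.inr i) := huv
          rw [gset] at this
          simpa using this
        have hnm : n (Sum.inr i) = z₁ ∨ n (Sum.inr i) = z₂ ∨ n (Sum.inr i) = z₃ := by
          have : n (Sum.inr i) ∈ T.graph.neighborSet (Sum.inr i) := hn (Sum.inr i)
          rw [gset] at this
          simpa using this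
        obtain ⟨w, hvw, hnw, hseteq⟩ := third_of_mem g12 g13 g23
          (fun hh => hv hh) hvm hnm
        have hset' : T.graph.neighborSet (Sum.inr i) = {v, n (Sum.inr i), w} :=
          gset.trans hseteq
        have hadjw : T.graph.Adj (Sum.inr i) w := by
          have : w ∈ T.graph.neighborSet (Sum.inr i) := by rw [hset']; simp
          exact this
        obtain ⟨p₃, q₃, hap3, hsp3⟩ := h (Sum.inr i) w hadjw
        have hui : ∀ y : X, (Sum.inr i : PVert X) ≠ Sum.inl y := fun y hh =>
          by cases hh
        exact (share3 T R hui (fun hh => hv hh) hvw hnw hset' hpq (hc1 (Sum.inr i)) hap3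
          hside (hc2 (Sum.inr i)) hsp3).symm
  refine ⟨fun u => (c u).1, ?_, prop2⟩
  intro x
  have hlf : sideOf T (Sum.inl x) (n (Sum.inl x)) = {x} := side_of_leaf T (hn (Sum.inl x))
  exact eq_leaf_of_side R (hc1 (Sum.inl x)) x ((hc2 (Sum.inl x)).trans hlf)

end Final

section Main

variable {X : Type} [Fintype X]

lemma side_exists_of_splits_eq {T R : PhyloTree X} (h : splits T = splits R) :
    ∀ u v, T.graph.Adj u v → ∃ p q, R.graph.Adj p q ∧ sideOf R p q = sideOf T u v := by
  intro u v huv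
  have hmem : splitOf T u v ∈ splits R := by
    rw [← h]
    exact ⟨u, v, huv, rfl⟩
  obtain ⟨p, q, hpq, heq⟩ := hmem
  rw [splitOf, splitOf, Sym2.eq_iff] at heq
  rcases heq with ⟨h1, h2⟩ | ⟨h1, h2⟩
  · exact ⟨p, q, hpq, h1.symm⟩
  · exact ⟨q, p, hpq.symm, h1.symm⟩

lemma isom_of_splits_eq (T R : PhyloTree X) (h : splits T = splits R) : Isom T R := by
  have hTR := side_exists_of_splits_eq h
  have hRT := side_exists_of_splits_eq h.symm
  obtain ⟨φ, hφ1, hφ2⟩ := key T R hTR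
  obtain ⟨ψ, hψ1, hψ2⟩ := key R T hRT
  have hinv1 : ∀ u, ψ (φ u) = u := by
    intro u
    obtain ⟨v, hv⟩ := exists_nbr T u
    obtain ⟨p, q, hpq, hs⟩ := hTR u v hv
    rw [hφ2 u v p q hv hpq hs]
    exact hψ2 p q u v hpq hv hs.symm
  have hinv2 : ∀ p, φ (ψ p) = p := by
    intro p
    obtain ⟨q, hq⟩ := exists_nbr R p
    obtain ⟨u, v, huv, hs⟩ := hRT p q hq
    rw [hψ2 p q u v hq huv hs]
    exact hφ2 u v p q huv hq hs.symm
  have hadjφ : ∀ u v, T.graph.Adj u v → R.graph.Adj (φ u) (φ v) := by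
    intro u v huv
    obtain ⟨p, q, hpq, hs⟩ := hTR u v huv
    obtain ⟨p', q', hpq', hs'⟩ := hTR v u huv.symm
    have h1 : φ u = p := hφ2 _ _ _ _ huv hpq hs
    have h2 : φ v = p' := hφ2 _ _ _ _ huv.symm hpq' hs'
    have hqp : sideOf R q p = sideOf R p' q' := by
      rw [side_compl R hpq, hs, hs', side_compl T huv]
    obtain ⟨e1, e2⟩ := uniq R hpq.symm hpq' hqp
    rw [h1, h2, ← e1]
    exact hpq
  have hadjψ : ∀ u v, R.graph.Adj u v → T.graph.Adj (ψ u) (ψ v) := by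
    intro u v huv
    obtain ⟨p, q, hpq, hs⟩ := hRT u v huv
    obtain ⟨p', q', hpq', hs'⟩ := hRT v u huv.symm
    have h1 : ψ u = p := hψ2 _ _ _ _ huv hpq hs
    have h2 : ψ v = p' := hψ2 _ _ _ _ huv.symm hpq' hs'
    have hqp : sideOf T q p = sideOf T p' q' := by
      rw [side_compl T hpq, hs, hs', side_compl R huv]
    obtain ⟨e1, e2⟩ := uniq T hpq.symm hpq' hqp
    rw [h1, h2, ← e1]
    exact hpq
  refine ⟨⟨⟨φ, ψ, hinv1, hinv2⟩, ?_⟩, ?_⟩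
  · intro u v
    constructor
    · intro hh
      have := hadjψ _ _ hh
      simp only [Equiv.coe_fn_mk] at this
      rwa [hinv1, hinv1] at this
    · exact hadjφ u v
  · intro x
    exact hφ1 x

end Main

end SplitAux

end

/-- a binary phylogenetic tree is determined up to label-preserving
isomorphism by its split set. -/
theorem tree_determined_by_splits {X : Type} [Fintype X] (T R : PhyloTree X)
    (h : splits T = splits R) : Isom T R :=
  SplitAux.isom_of_splits_eq T R h
end

section
/- For every n ≥ 4 there exist unrooted binary phylogenetic trees T and R on n leaves that are connected by a single SPR move yet have maximum Robinson-Foulds distance d_RF(T,R) = 2(n-3): take a caterpillar tree T and move one end leaf to the opposite end. -/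
noncomputable section
namespace SprMax
open Classical Sum SimpleGraph

variable {n m : ℕ}

/-- attachment internal vertex of a leaf, given ordering `e` (position of each leaf). -/
def attF (hm : m = n - 2) (hn : 4 ≤ n) (e : Fin n ≃ Fin n) (x : Fin n) : Fin m :=
  ⟨min ((e x : ℕ) - 1) (n - 3), by omega⟩

lemma attF_val (hm : m = n - 2) (hn : 4 ≤ n) (e : Fin n ≃ Fin n) (x : Fin n) :
    (attF hm hn e x : ℕ) = min ((e x : ℕ) - 1) (n - 3) := rfl

def catAdj (hm : m = n - 2) (hn : 4 ≤ n) (e : Fin n ≃ Fin n) :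
    (Fin n ⊕ Fin m) → (Fin n ⊕ Fin m) → Prop
  | inl _, inl _ => False
  | inl x, inr i => i = attF hm hn e x
  | inr i, inl x => i = attF hm hn e x
  | inr i, inr j => (i : ℕ) + 1 = j ∨ (j : ℕ) + 1 = i

def catGraph (hm : m = n - 2) (hn : 4 ≤ n) (e : Fin n ≃ Fin n) :
    SimpleGraph (Fin n ⊕ Fin m) where
  Adj := catAdj hm hn e
  symm := by
    constructor
    rintro (x | i) (y | j) h
    · exact h
    · exact h
    · exact h
    · exact (show (i:ℕ)+1 = j ∨ (j:ℕ)+1 = i from h).symm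
  loopless := by
    constructor
    rintro (x | i) h
    · exact h
    · rcases (show (i:ℕ)+1 = i ∨ (i:ℕ)+1 = i from h) with h' | h' <;> omega

@[simp] lemma catGraph_adj_inl_inl (hm : m = n - 2) (hn : 4 ≤ n) (e : Fin n ≃ Fin n)
    (x y : Fin n) : ¬ (catGraph hm hn e).Adj (inl x) (inl y) := fun h => h

@[simp] lemma catGraph_adj_inl_inr (hm : m = n - 2) (hn : 4 ≤ n) (e : Fin n ≃ Fin n)
    (x : Fin n) (i : Fin m) : (catGraph hm hn e).Adj (inl x) (inr i) ↔ i = attF hm hn e x :=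
  Iff.rfl

@[simp] lemma catGraph_adj_inr_inl (hm : m = n - 2) (hn : 4 ≤ n) (e : Fin n ≃ Fin n)
    (x : Fin n) (i : Fin m) : (catGraph hm hn e).Adj (inr i) (inl x) ↔ i = attF hm hn e x :=
  Iff.rfl

@[simp] lemma catGraph_adj_inr_inr (hm : m = n - 2) (hn : 4 ≤ n) (e : Fin n ≃ Fin n)
    (i j : Fin m) : (catGraph hm hn e).Adj (inr i) (inr j) ↔ (i:ℕ)+1 = j ∨ (j:ℕ)+1 = i :=
  Iff.rfl

/-- walks preserve any adjacency-invariant coloring -/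
lemma color_eq_of_reachable {V : Type*} {G : SimpleGraph V} {c : V → Prop}
    (hc : ∀ a b, G.Adj a b → (c a ↔ c b)) {u v : V} (h : G.Reachable u v) : c u ↔ c v := by
  obtain ⟨w⟩ := h
  induction w with
  | nil => exact Iff.rfl
  | cons ha _ ih => exact (hc _ _ ha).trans ih

lemma eq_of_reachable_isolated {V : Type*} {G : SimpleGraph V} {v : V}
    (hv : ∀ z, ¬ G.Adj v z) {u : V} (h : G.Reachable u v) : u = v := by
  obtain ⟨w⟩ := h.symm
  cases w with
  | nil => rfl
  | cons ha _ => exact absurd ha (hv _)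

/-- climbing along the internal path -/
lemma reach_chain {G : SimpleGraph (Fin n ⊕ Fin m)} (P : ℕ → Prop)
    (hP : ∀ a b c : ℕ, P a → P b → a ≤ c → c ≤ b → P c)
    (hadj : ∀ j j' : Fin m, (j : ℕ) + 1 = (j' : ℕ) → P j → P j' → G.Adj (inr j) (inr j')) :
    ∀ j j' : Fin m, P j → P j' → G.Reachable (inr j) (inr j') := by
  have key : ∀ d : ℕ, ∀ j j' : Fin m, (j' : ℕ) = (j : ℕ) + d → P j → P j' →
      G.Reachable (inr j) (inr j') := by
    intro d
    induction d with
    | zero =>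
      intro j j' h _ _
      have : j = j' := Fin.ext (by omega)
      subst this; exact Reachable.refl _
    | succ d ih =>
      intro j j' h hj hj'
      have hlt : (j : ℕ) + d < m := by have := j'.isLt; omega
      set jp : Fin m := ⟨(j : ℕ) + d, hlt⟩ with hjp_def
      have hjp : P jp := hP j j' ((j:ℕ)+d) hj hj' (by omega) (by omega)
      have r1 := ih j jp rfl hj hjp
      have hadj' : G.Adj (inr jp) (inr j') := hadj jp j' (by simp [hjp_def]; omega) hjp hj'
      exact r1.trans hadj'.reachable
  intro j j' hj hj'
  rcases le_total (j : ℕ) (j' : ℕ) with h | h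
  · exact key ((j':ℕ) - j) j j' (by omega) hj hj'
  · exact (key ((j:ℕ) - j') j' j (by omega) hj' hj).symm

end SprMax
noncomputable section
namespace SprMax
open Classical Sum SimpleGraph

variable {n m : ℕ}

section Components
variable (hm : m = n - 2) (hn : 4 ≤ n) (e : Fin n ≃ Fin n)

local notation "G" => catGraph hm hn e

/-- after deleting the pendant edge at `x`, the vertex `inl x` is isolated -/
lemma pendant_isolated (x : Fin n) (z : Fin n ⊕ Fin m) :
    ¬ ((G).deleteEdges {s(inl x, inr (attF hm hn e x))}).Adj (inl x) z := by
  rintro h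
  rw [SimpleGraph.deleteEdges_adj] at h
  obtain ⟨hadj, hne⟩ := h
  cases z with
  | inl y => exact hadj
  | inr i =>
    have : i = attF hm hn e x := hadj
    subst this
    exact hne rfl

lemma pendant_reach_leaf (x y : Fin n) :
    ((G).deleteEdges {s(inl x, inr (attF hm hn e x))}).Reachable (inl y) (inl x) ↔ y = x := by
  constructor
  · intro h
    have := eq_of_reachable_isolated (pendant_isolated hm hn e x) h
    exact Sum.inl.inj this
  · rintro rfl; exact Reachable.refl _

lemma pendant_reach_int (x y : Fin n) :
    ((G).deleteEdges {s(inl x, inr (attF hm hn e x))}).Reachable (inl y) (inr (attF hm hn e x))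
      ↔ y ≠ x := by
  constructor
  · intro h hyx
    subst hyx
    have := eq_of_reachable_isolated (pendant_isolated hm hn e y) h.symm
    simp at this
  · intro hyx
    have step : ((G).deleteEdges {s(inl x, inr (attF hm hn e x))}).Adj (inl y)
        (inr (attF hm hn e y)) := by
      rw [SimpleGraph.deleteEdges_adj]
      refine ⟨rfl, ?_⟩
      simp only [Set.mem_singleton_iff, Sym2.eq_iff]
      rintro (⟨h1, -⟩ | ⟨h1, -⟩)
      · exact hyx (by injection h1)
      · exact nomatch h1
    refine step.reachable.trans ?_
    refine reach_chain (fun _ => True) (fun _ _ _ _ _ _ _ => trivial) ?_ _ _ trivial trivial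
    intro j j' hjj _ _
    rw [SimpleGraph.deleteEdges_adj]
    refine ⟨Or.inl hjj, ?_⟩
    simp only [Set.mem_singleton_iff, Sym2.eq_iff]
    rintro (⟨h1, -⟩ | ⟨-, h1⟩) <;> exact nomatch h1

/-- coloring for the internal edge (k, k+1) -/
lemma internal_color (k : ℕ) (hk : k + 1 < m) :
    ∀ a b, ((G).deleteEdges {s((inr ⟨k, by omega⟩ : Fin n ⊕ Fin m), inr ⟨k+1, hk⟩)}).Adj a b →
      ((fun v => match v with
        | inl x => (e x : ℕ) ≤ k + 1
        | inr j => (j : ℕ) ≤ k) a ↔ (fun v => match v with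
        | inl x => (e x : ℕ) ≤ k + 1
        | inr j => (j : ℕ) ≤ k) b) := by
  rintro (x | i) (y | j) h <;> rw [SimpleGraph.deleteEdges_adj] at h <;> obtain ⟨hadj, hne⟩ := h
  · exact absurd hadj (by simp)
  · have : j = attF hm hn e x := hadj
    subst this
    simp only [attF_val]
    have := (e x).isLt
    omega
  · have : i = attF hm hn e y := hadj
    subst this
    simp only [attF_val]
    have := (e y).isLt
    omega
  · have hcases : ¬(((i:ℕ) = k ∧ (j:ℕ) = k+1) ∨ ((i:ℕ) = k+1 ∧ (j:ℕ) = k)) := by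
      rintro (⟨h1, h2⟩ | ⟨h1, h2⟩) <;> apply hne <;>
        simp only [Set.mem_singleton_iff, Sym2.eq_iff, Sum.inr.injEq, Fin.ext_iff] <;> omega
    have hadj' : (i:ℕ)+1 = j ∨ (j:ℕ)+1 = i := hadj
    simp only
    omega

lemma internal_reach_left (k : ℕ) (hk : k + 1 < m) (y : Fin n) :
    ((G).deleteEdges {s((inr ⟨k, by omega⟩ : Fin n ⊕ Fin m), inr ⟨k+1, hk⟩)}).Reachable
      (inl y) (inr ⟨k, by omega⟩) ↔ (e y : ℕ) < k + 2 := by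
  constructor
  · intro h
    have := color_eq_of_reachable (internal_color hm hn e k hk) h
    simp only at this
    omega
  · intro hy
    have hstep : ((G).deleteEdges {s((inr ⟨k, by omega⟩ : Fin n ⊕ Fin m), inr ⟨k+1, hk⟩)}).Adj
        (inl y) (inr (attF hm hn e y)) := by
      rw [SimpleGraph.deleteEdges_adj]
      refine ⟨rfl, ?_⟩
      simp only [Set.mem_singleton_iff, Sym2.eq_iff]
      rintro (⟨h1, -⟩ | ⟨h1, -⟩) <;> exact nomatch h1
    refine hstep.reachable.trans ?_
    refine reach_chain (fun a => a ≤ k) (fun a b c _ hb _ hcb => le_trans hcb hb) ?_ _ _ ?_ ?_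
    · intro j j' hjj hj hj'
      rw [SimpleGraph.deleteEdges_adj]
      refine ⟨Or.inl hjj, ?_⟩
      simp only [Set.mem_singleton_iff, Sym2.eq_iff, Sum.inr.injEq, Fin.ext_iff]
      omega
    · rw [attF_val]; have := (e y).isLt; omega
    · exact le_refl k
  
lemma internal_reach_right (k : ℕ) (hk : k + 1 < m) (y : Fin n) :
    ((G).deleteEdges {s((inr ⟨k, by omega⟩ : Fin n ⊕ Fin m), inr ⟨k+1, hk⟩)}).Reachable
      (inl y) (inr ⟨k+1, hk⟩) ↔ ¬ (e y : ℕ) < k + 2 := by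
  constructor
  · intro h hy
    have := color_eq_of_reachable (internal_color hm hn e k hk) h
    simp only at this
    omega
  · intro hy
    have hstep : ((G).deleteEdges {s((inr ⟨k, by omega⟩ : Fin n ⊕ Fin m), inr ⟨k+1, hk⟩)}).Adj
        (inl y) (inr (attF hm hn e y)) := by
      rw [SimpleGraph.deleteEdges_adj]
      refine ⟨rfl, ?_⟩
      simp only [Set.mem_singleton_iff, Sym2.eq_iff]
      rintro (⟨h1, -⟩ | ⟨h1, -⟩) <;> exact nomatch h1
    refine hstep.reachable.trans ?_
    refine reach_chain (fun a => k + 1 ≤ a) (fun a b c ha _ hac _ => le_trans ha hac) ?_ _ _ ?_ ?_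
    · intro j j' hjj hj hj'
      rw [SimpleGraph.deleteEdges_adj]
      refine ⟨Or.inl hjj, ?_⟩
      simp only [Set.mem_singleton_iff, Sym2.eq_iff, Sum.inr.injEq, Fin.ext_iff]
      omega
    · rw [attF_val]; have := (e y).isLt; omega
    · exact le_refl _

lemma internal_not_reach (k : ℕ) (hk : k + 1 < m) :
    ¬ ((G).deleteEdges {s((inr ⟨k, by omega⟩ : Fin n ⊕ Fin m), inr ⟨k+1, hk⟩)}).Reachable
      (inr ⟨k, by omega⟩) (inr ⟨k+1, hk⟩) := by
  intro h
  have := color_eq_of_reachable (internal_color hm hn e k hk) h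
  simp only at this
  omega

lemma catGraph_connected : (G).Connected := by
  have hm2 : 0 < m := by omega
  rw [SimpleGraph.connected_iff]
  have hchain : ∀ j j' : Fin m, (G).Reachable (inr j) (inr j') := fun j j' =>
    reach_chain (fun _ => True) (fun _ _ _ _ _ _ _ => trivial)
      (fun j j' hjj _ _ => Or.inl hjj) j j' trivial trivial
  have hbase : ∀ v : Fin n ⊕ Fin m, (G).Reachable v (inr ⟨0, hm2⟩) := by
    rintro (x | i)
    · exact ((catGraph_adj_inl_inr hm hn e x _).mpr rfl).reachable.trans (hchain _ _)
    · exact hchain _ _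
  exact ⟨fun u v => (hbase u).trans (hbase v).symm, ⟨inr ⟨0, hm2⟩⟩⟩

end Components
end SprMax
noncomputable section
namespace SprMax
open Classical Sum SimpleGraph

variable {n m : ℕ}

section Degrees
variable (hm : m = n - 2) (hn : 4 ≤ n) (e : Fin n ≃ Fin n)

local notation "G" => catGraph hm hn e

lemma deg_leaf (x : Fin n) : ((G).neighborSet (inl x)).ncard = 1 := by
  have hset : (G).neighborSet (inl x) = {inr (attF hm hn e x)} := by
    ext (y | j)
    · simp [SimpleGraph.mem_neighborSet]
    · simp only [SimpleGraph.mem_neighborSet, catGraph_adj_inl_inr, Set.mem_singleton_iff,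
        Sum.inr.injEq]
  rw [hset, Set.ncard_singleton]

lemma deg_internal (i : Fin m) : ((G).neighborSet (inr i)).ncard = 3 := by
  have hin : (i : ℕ) < n - 2 := hm ▸ i.isLt
  by_cases h0 : (i : ℕ) = 0
  · have hset : (G).neighborSet (inr i) =
        {inl (e.symm ⟨0, by omega⟩), inl (e.symm ⟨1, by omega⟩), inr ⟨1, by omega⟩} := by
      ext (y | j)
      · simp only [SimpleGraph.mem_neighborSet, catGraph_adj_inr_inl, Set.mem_insert_iff,
          Set.mem_singleton_iff, Sum.inl.injEq, reduceCtorEq, or_false,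
          Equiv.eq_symm_apply, Equiv.apply_symm_apply, Fin.ext_iff, attF_val]
        have := (e y).isLt
        omega
      · simp only [SimpleGraph.mem_neighborSet, catGraph_adj_inr_inr, Set.mem_insert_iff,
          Set.mem_singleton_iff, Sum.inr.injEq, reduceCtorEq, false_or, Fin.ext_iff]
        omega
    rw [hset]
    exact Set.ncard_eq_three.mpr ⟨_, _, _, by simp [Fin.ext_iff], by simp, by simp, rfl⟩
  · by_cases htop : (i : ℕ) = n - 3
    · have hset : (G).neighborSet (inr i) =
          {inl (e.symm ⟨n-2, by omega⟩), inl (e.symm ⟨n-1, by omega⟩), inr ⟨n-4, by omega⟩} := by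
        ext (y | j)
        · simp only [SimpleGraph.mem_neighborSet, catGraph_adj_inr_inl, Set.mem_insert_iff,
            Set.mem_singleton_iff, Sum.inl.injEq, reduceCtorEq, or_false,
            Equiv.eq_symm_apply, Equiv.apply_symm_apply, Fin.ext_iff, attF_val]
          have := (e y).isLt
          omega
        · simp only [SimpleGraph.mem_neighborSet, catGraph_adj_inr_inr, Set.mem_insert_iff,
            Set.mem_singleton_iff, Sum.inr.injEq, reduceCtorEq, false_or, Fin.ext_iff]
          have := j.isLt
          omega
      rw [hset]
      refine Set.ncard_eq_three.mpr ⟨_, _, _, ?_, by simp, by simp, rfl⟩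
      simp only [ne_eq, Sum.inl.injEq, EmbeddingLike.apply_eq_iff_eq, Fin.ext_iff]
      omega
    · have hset : (G).neighborSet (inr i) =
          {inl (e.symm ⟨(i:ℕ)+1, by omega⟩), inr ⟨(i:ℕ)-1, by omega⟩, inr ⟨(i:ℕ)+1, by omega⟩} := by
        ext (y | j)
        · simp only [SimpleGraph.mem_neighborSet, catGraph_adj_inr_inl, Set.mem_insert_iff,
            Set.mem_singleton_iff, Sum.inl.injEq, reduceCtorEq, or_false,
            Equiv.eq_symm_apply, Equiv.apply_symm_apply, Fin.ext_iff, attF_val]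
          have := (e y).isLt
          omega
        · simp only [SimpleGraph.mem_neighborSet, catGraph_adj_inr_inr, Set.mem_insert_iff,
            Set.mem_singleton_iff, Sum.inr.injEq, reduceCtorEq, false_or, Fin.ext_iff]
          omega
      rw [hset]
      refine Set.ncard_eq_three.mpr ⟨_, _, _, by simp, by simp, ?_, rfl⟩
      simp only [ne_eq, Sum.inr.injEq, Fin.ext_iff]
      omega

lemma catGraph_acyclic : (G).IsAcyclic := by
  rw [isAcyclic_iff_forall_adj_isBridge]
  intro v w hvw
  rw [isBridge_iff]
  refine ?_
  rcases v with x | i <;> rcases w with y | j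
  · exact absurd hvw (by simp)
  · have hj : j = attF hm hn e x := hvw
    subst hj
    intro h
    exact (pendant_reach_int hm hn e x x).mp h rfl
  · have hi : i = attF hm hn e y := hvw
    subst hi
    rw [Sym2.eq_swap]
    intro h
    exact (pendant_reach_int hm hn e y y).mp h.symm rfl
  · rcases (show (i:ℕ)+1 = j ∨ (j:ℕ)+1 = i from hvw) with h1 | h1
    · have hk : (i : ℕ) + 1 < m := by have := j.isLt; omega
      have hjj : j = ⟨(i:ℕ)+1, hk⟩ := Fin.ext h1.symm
      have hii : i = ⟨(i:ℕ), i.isLt⟩ := Fin.ext rfl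
      subst hjj
      intro h
      exact internal_not_reach hm hn e (i:ℕ) hk (hii ▸ h)
    · have hk : (j : ℕ) + 1 < m := by have := i.isLt; omega
      have hii : i = ⟨(j:ℕ)+1, hk⟩ := Fin.ext h1.symm
      have hjj : j = ⟨(j:ℕ), j.isLt⟩ := Fin.ext rfl
      subst hii
      intro h
      rw [Sym2.eq_swap] at h
      exact internal_not_reach hm hn e (j:ℕ) hk (hjj ▸ h.symm)

end Degrees

def catTree (hn : 4 ≤ n) (e : Fin n ≃ Fin n) : PhyloTree (Fin n) where
  graph := catGraph (m := Fintype.card (Fin n) - 2) (by simp) hn e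
  isTree := ⟨catGraph_connected _ hn e, catGraph_acyclic _ hn e⟩
  leaf_deg := deg_leaf _ hn e
  internal_deg := deg_internal _ hn e

end SprMax
noncomputable section
namespace SprMax
open Classical Sum SimpleGraph

variable {n : ℕ}

lemma hmcard (n : ℕ) : Fintype.card (Fin n) - 2 = n - 2 := by simp

/-- prefix of size `M` in the ordering `e` -/
def pre (e : Fin n ≃ Fin n) (M : ℕ) : Set (Fin n) := {x | (e x : ℕ) < M}

lemma mem_pre {e : Fin n ≃ Fin n} {M : ℕ} {x : Fin n} : x ∈ pre e M ↔ (e x : ℕ) < M := Iff.rfl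

section Sides
variable (hn : 4 ≤ n) (e : Fin n ≃ Fin n)

lemma sideOf_pendant₁ (x : Fin n) :
    sideOf (catTree hn e) (inl x) (inr (attF (hmcard n) hn e x)) = {x} := by
  ext y
  rw [Set.mem_singleton_iff]
  exact pendant_reach_leaf (hmcard n) hn e x y

lemma sideOf_pendant₂ (x : Fin n) :
    sideOf (catTree hn e) (inr (attF (hmcard n) hn e x)) (inl x) = ({x} : Set (Fin n))ᶜ := by
  ext y
  have h := pendant_reach_int (hmcard n) hn e x y
  rw [Sym2.eq_swap] at h
  exact h

lemma sideOf_internal₁ (k : ℕ) (hk : k + 1 < Fintype.card (Fin n) - 2) :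
    sideOf (catTree hn e) (inr ⟨k, by omega⟩) (inr ⟨k+1, hk⟩) = pre e (k+2) := by
  ext y
  exact internal_reach_left (hmcard n) hn e k hk y

lemma sideOf_internal₂ (k : ℕ) (hk : k + 1 < Fintype.card (Fin n) - 2) :
    sideOf (catTree hn e) (inr ⟨k+1, hk⟩) (inr ⟨k, by omega⟩) = (pre e (k+2))ᶜ := by
  ext y
  have h := internal_reach_right (hmcard n) hn e k hk y
  rw [Sym2.eq_swap] at h
  exact h

theorem splits_cat : splits (catTree hn e) =
    {σ | ∃ x : Fin n, σ = s(({x} : Set (Fin n)), {x}ᶜ)} ∪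
    {σ | ∃ M : ℕ, 2 ≤ M ∧ M ≤ n - 2 ∧ σ = s(pre e M, (pre e M)ᶜ)} := by
  have hcard := hmcard n
  ext σ
  constructor
  · rintro ⟨u, v, hadj, rfl⟩
    rcases u with x | i <;> rcases v with y | j
    · exact absurd hadj (by simp [catTree])
    · left
      have hj : j = attF (hmcard n) hn e x := hadj
      subst hj
      refine ⟨x, ?_⟩
      simp only [splitOf]
      rw [sideOf_pendant₁, sideOf_pendant₂]
    · left
      have hi : i = attF (hmcard n) hn e y := hadj
      subst hi
      refine ⟨y, ?_⟩
      simp only [splitOf]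
      rw [sideOf_pendant₁, sideOf_pendant₂, Sym2.eq_swap]
    · rcases (show (i:ℕ) + 1 = (j:ℕ) ∨ (j:ℕ) + 1 = (i:ℕ) from hadj) with h1 | h1
      · right
        have hk : (i:ℕ) + 1 < Fintype.card (Fin n) - 2 := by have := j.isLt; omega
        have hjj : j = ⟨(i:ℕ)+1, hk⟩ := Fin.ext h1.symm
        rw [hjj]
        refine ⟨(i:ℕ) + 2, by omega, by have := j.isLt; omega, ?_⟩
        simp only [splitOf]
        rw [sideOf_internal₁ hn e (i:ℕ) hk, sideOf_internal₂ hn e (i:ℕ) hk]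
      · right
        have hk : (j:ℕ) + 1 < Fintype.card (Fin n) - 2 := by have := i.isLt; omega
        have hii : i = ⟨(j:ℕ)+1, hk⟩ := Fin.ext h1.symm
        rw [hii]
        refine ⟨(j:ℕ) + 2, by omega, by have := i.isLt; omega, ?_⟩
        simp only [splitOf]
        rw [sideOf_internal₁ hn e (j:ℕ) hk, sideOf_internal₂ hn e (j:ℕ) hk, Sym2.eq_swap]
  · rintro (⟨x, rfl⟩ | ⟨M, hM2, hMn, rfl⟩)
    · refine ⟨inl x, inr (attF (hmcard n) hn e x), rfl, ?_⟩
      simp only [splitOf]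
      rw [sideOf_pendant₁, sideOf_pendant₂]
    · have hk : (M - 2) + 1 < Fintype.card (Fin n) - 2 := by omega
      refine ⟨inr ⟨M-2, by omega⟩, inr ⟨M-2+1, hk⟩, Or.inl rfl, ?_⟩
      simp only [splitOf]
      rw [sideOf_internal₁ hn e (M-2) hk, sideOf_internal₂ hn e (M-2) hk]
      have hM : M - 2 + 2 = M := by omega
      rw [hM]

theorem sides_cat : sides (catTree hn e) =
    {A | ∃ x : Fin n, A = {x} ∨ A = ({x} : Set (Fin n))ᶜ} ∪
    {A | ∃ M : ℕ, 2 ≤ M ∧ M ≤ n - 2 ∧ (A = pre e M ∨ A = (pre e M)ᶜ)} := by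
  have hcard := hmcard n
  ext A
  constructor
  · rintro ⟨u, v, hadj, rfl⟩
    rcases u with x | i <;> rcases v with y | j
    · exact absurd hadj (by simp [catTree])
    · left
      have hj : j = attF (hmcard n) hn e x := hadj
      subst hj
      exact ⟨x, Or.inl (sideOf_pendant₁ hn e x)⟩
    · left
      have hi : i = attF (hmcard n) hn e y := hadj
      subst hi
      exact ⟨y, Or.inr (sideOf_pendant₂ hn e y)⟩
    · rcases (show (i:ℕ) + 1 = (j:ℕ) ∨ (j:ℕ) + 1 = (i:ℕ) from hadj) with h1 | h1
      · right
        have hk : (i:ℕ) + 1 < Fintype.card (Fin n) - 2 := by have := j.isLt; omega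
        have hjj : j = ⟨(i:ℕ)+1, hk⟩ := Fin.ext h1.symm
        rw [hjj]
        exact ⟨(i:ℕ) + 2, by omega, by have := j.isLt; omega,
          Or.inl (sideOf_internal₁ hn e (i:ℕ) hk)⟩
      · right
        have hk : (j:ℕ) + 1 < Fintype.card (Fin n) - 2 := by have := i.isLt; omega
        have hii : i = ⟨(j:ℕ)+1, hk⟩ := Fin.ext h1.symm
        rw [hii]
        exact ⟨(j:ℕ) + 2, by omega, by have := i.isLt; omega,
          Or.inr (sideOf_internal₂ hn e (j:ℕ) hk)⟩
  · rintro (⟨x, (rfl | rfl)⟩ | ⟨M, hM2, hMn, (rfl | rfl)⟩)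
    · exact ⟨inl x, inr (attF (hmcard n) hn e x), rfl, (sideOf_pendant₁ hn e x).symm⟩
    · exact ⟨inr (attF (hmcard n) hn e x), inl x, rfl, (sideOf_pendant₂ hn e x).symm⟩
    · have hk : (M - 2) + 1 < Fintype.card (Fin n) - 2 := by omega
      have hM : M - 2 + 2 = M := by omega
      exact ⟨inr ⟨M-2, by omega⟩, inr ⟨M-2+1, hk⟩, Or.inl rfl,
        by rw [sideOf_internal₁ hn e (M-2) hk, hM]⟩
    · have hk : (M - 2) + 1 < Fintype.card (Fin n) - 2 := by omega
      have hM : M - 2 + 2 = M := by omega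
      exact ⟨inr ⟨M-2+1, hk⟩, inr ⟨M-2, by omega⟩, Or.inr rfl,
        by rw [sideOf_internal₂ hn e (M-2) hk, hM]⟩

end Sides
end SprMax
noncomputable section
namespace SprMax
open Classical Sum SimpleGraph

variable {X : Type} [Fintype X]

lemma isom_symm {T R : PhyloTree X} (h : Isom T R) : Isom R T := by
  obtain ⟨φ, hφ⟩ := h
  refine ⟨φ.symm, fun x => ?_⟩
  show φ.toEquiv.symm (inl x) = inl x
  rw [Equiv.symm_apply_eq]
  exact (hφ x).symm

lemma isom_splits_subset {T R : PhyloTree X} (h : Isom T R) : splits T ⊆ splits R := by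
  obtain ⟨φ, hφ⟩ := h
  have hside : ∀ u v, sideOf R (φ u) (φ v) = sideOf T u v := by
    intro u v
    have hiso : ∀ a b : PVert X, (T.graph.deleteEdges {s(u,v)}).Adj a b ↔
        (R.graph.deleteEdges {s(φ u, φ v)}).Adj (φ a) (φ b) := by
      intro a b
      simp only [SimpleGraph.deleteEdges_adj, Set.mem_singleton_iff]
      have h1 : R.graph.Adj (φ a) (φ b) ↔ T.graph.Adj a b := φ.map_rel_iff
      have h2 : s(φ a, φ b) = s(φ u, φ v) ↔ s(a, b) = s(u, v) := by
        simp only [Sym2.eq_iff]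
        constructor
        · rintro (⟨ha, hb⟩ | ⟨ha, hb⟩)
          · exact Or.inl ⟨φ.toEquiv.injective ha, φ.toEquiv.injective hb⟩
          · exact Or.inr ⟨φ.toEquiv.injective ha, φ.toEquiv.injective hb⟩
        · rintro (⟨rfl, rfl⟩ | ⟨rfl, rfl⟩)
          · exact Or.inl ⟨rfl, rfl⟩
          · exact Or.inr ⟨rfl, rfl⟩
      rw [h1, h2]
    let ψ : (T.graph.deleteEdges {s(u,v)}) ≃g (R.graph.deleteEdges {s(φ u, φ v)}) :=
      ⟨φ.toEquiv, by intro a b; exact (hiso a b).symm⟩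
    ext x
    show (R.graph.deleteEdges {s(φ u, φ v)}).Reachable (inl x) (φ u) ↔
      (T.graph.deleteEdges {s(u,v)}).Reachable (inl x) u
    have hx : (inl x : PVert X) = ψ (inl x) := (hφ x).symm
    have hreach := SimpleGraph.Iso.reachable_iff (φ := ψ) (u := (inl x : PVert X)) (v := u)
    rw [← hx] at hreach
    exact hreach
  rintro σ ⟨u, v, hadj, rfl⟩
  refine ⟨φ u, φ v, φ.map_rel_iff.mpr hadj, ?_⟩
  simp only [splitOf]
  rw [hside u v, hside v u]

lemma isom_splits {T R : PhyloTree X} (h : Isom T R) : splits T = splits R :=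
  subset_antisymm (isom_splits_subset h) (isom_splits_subset (isom_symm h))

end SprMax
noncomputable section
namespace SprMax
open Classical Sum SimpleGraph

variable {n : ℕ}

/-- the rotated ordering `1, 2, …, n-1, 0` -/
def rot (hn : 4 ≤ n) : Fin n ≃ Fin n where
  toFun x := ⟨if (x:ℕ) = 0 then n - 1 else (x:ℕ) - 1, by have := x.isLt; split <;> omega⟩
  invFun x := ⟨if (x:ℕ) = n - 1 then 0 else (x:ℕ) + 1, by have := x.isLt; split <;> omega⟩
  left_inv x := by
    have hx := x.isLt
    apply Fin.ext
    show (if (if (x:ℕ) = 0 then n - 1 else (x:ℕ) - 1) = n - 1 then 0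
      else (if (x:ℕ) = 0 then n - 1 else (x:ℕ) - 1) + 1) = (x:ℕ)
    split_ifs <;> first | contradiction | omega
  right_inv x := by
    have hx := x.isLt
    apply Fin.ext
    show (if (if (x:ℕ) = n - 1 then 0 else (x:ℕ) + 1) = 0 then n - 1
      else (if (x:ℕ) = n - 1 then 0 else (x:ℕ) + 1) - 1) = (x:ℕ)
    split_ifs <;> first | contradiction | omega

lemma rot_val (hn : 4 ≤ n) (x : Fin n) :
    ((rot hn) x : ℕ) = if (x:ℕ) = 0 then n - 1 else (x:ℕ) - 1 := by
  simp only [rot, Equiv.coe_fn_mk]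

/-- prefix sets of the identity and rotated caterpillars -/
def IT (n M : ℕ) : Set (Fin n) := {x | (x : ℕ) < M}
def JR (n M : ℕ) : Set (Fin n) := {x | 1 ≤ (x : ℕ) ∧ (x : ℕ) ≤ M}

lemma pre_refl (M : ℕ) : pre (Equiv.refl (Fin n)) M = IT n M := rfl

lemma pre_rot (hn : 4 ≤ n) {M : ℕ} (hM : M ≤ n - 2) : pre (rot hn) M = JR n M := by
  ext x
  have := x.isLt
  simp only [pre, Set.mem_setOf_eq, rot_val, JR]
  split_ifs <;> omega

def TrivFam (n : ℕ) : Set (Sym2 (Set (Fin n))) :=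
  {σ | ∃ x : Fin n, σ = s(({x} : Set (Fin n)), {x}ᶜ)}

def ATFam (n : ℕ) : Set (Sym2 (Set (Fin n))) :=
  {σ | ∃ M : ℕ, 2 ≤ M ∧ M ≤ n - 2 ∧ σ = s(IT n M, (IT n M)ᶜ)}

def ARFam (n : ℕ) : Set (Sym2 (Set (Fin n))) :=
  {σ | ∃ M : ℕ, 2 ≤ M ∧ M ≤ n - 2 ∧ σ = s(JR n M, (JR n M)ᶜ)}

lemma splits_T (hn : 4 ≤ n) :
    splits (catTree hn (Equiv.refl (Fin n))) = TrivFam n ∪ ATFam n := by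
  rw [splits_cat]
  rfl

lemma splits_R (hn : 4 ≤ n) :
    splits (catTree hn (rot hn)) = TrivFam n ∪ ARFam n := by
  rw [splits_cat]
  apply congrArg (TrivFam n ∪ ·)
  ext σ
  constructor
  · rintro ⟨M, h2, hM, rfl⟩
    exact ⟨M, h2, hM, by rw [pre_rot hn hM]⟩
  · rintro ⟨M, h2, hM, rfl⟩
    exact ⟨M, h2, hM, by rw [pre_rot hn hM]⟩

lemma sides_T (hn : 4 ≤ n) :
    sides (catTree hn (Equiv.refl (Fin n))) =
      {A | ∃ x : Fin n, A = {x} ∨ A = ({x} : Set (Fin n))ᶜ} ∪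
      {A | ∃ M : ℕ, 2 ≤ M ∧ M ≤ n - 2 ∧ (A = IT n M ∨ A = (IT n M)ᶜ)} := by
  rw [sides_cat]
  rfl

lemma sides_R (hn : 4 ≤ n) :
    sides (catTree hn (rot hn)) =
      {A | ∃ x : Fin n, A = {x} ∨ A = ({x} : Set (Fin n))ᶜ} ∪
      {A | ∃ M : ℕ, 2 ≤ M ∧ M ≤ n - 2 ∧ (A = JR n M ∨ A = (JR n M)ᶜ)} := by
  rw [sides_cat]
  apply congrArg ({A | ∃ x : Fin n, A = {x} ∨ A = ({x} : Set (Fin n))ᶜ} ∪ ·)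
  ext A
  constructor
  · rintro ⟨M, h2, hM, hA⟩
    exact ⟨M, h2, hM, by rw [← pre_rot hn hM]; exact hA⟩
  · rintro ⟨M, h2, hM, hA⟩
    exact ⟨M, h2, hM, by rw [pre_rot hn hM]; exact hA⟩

/-! ### distinctness of the split families -/

section Distinct

lemma IT_ne_single (hn : 4 ≤ n) {M : ℕ} (hM : 2 ≤ M) (x : Fin n) : IT n M ≠ {x} := by
  intro h
  rw [Set.ext_iff] at h
  have h0 := h ⟨0, by omega⟩
  have h1 := h ⟨1, by omega⟩
  simp only [IT, Set.mem_setOf_eq, Set.mem_singleton_iff, Fin.ext_iff] at h0 h1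
  omega

lemma IT_ne_co_single (hn : 4 ≤ n) {M : ℕ} (hM : M ≤ n - 2) (x : Fin n) : IT n M ≠ ({x} : Set (Fin n))ᶜ := by
  intro h
  rw [Set.ext_iff] at h
  have h0 := h ⟨n-2, by omega⟩
  have h1 := h ⟨n-1, by omega⟩
  simp only [IT, Set.mem_setOf_eq, Set.mem_compl_iff, Set.mem_singleton_iff, Fin.ext_iff,
    not_not] at h0 h1
  omega

lemma JR_ne_single (hn : 4 ≤ n) {M : ℕ} (hM : 2 ≤ M) (hM' : M ≤ n - 2) (x : Fin n) : JR n M ≠ {x} := by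
  intro h
  rw [Set.ext_iff] at h
  have h0 := h ⟨1, by omega⟩
  have h1 := h ⟨2, by omega⟩
  simp only [JR, Set.mem_setOf_eq, Set.mem_singleton_iff, Fin.ext_iff] at h0 h1
  omega

lemma JR_ne_co_single (hn : 4 ≤ n) {M : ℕ} (hM : M ≤ n - 2) (x : Fin n) : JR n M ≠ ({x} : Set (Fin n))ᶜ := by
  intro h
  rw [Set.ext_iff] at h
  have h0 := h ⟨0, by omega⟩
  have h1 := h ⟨n-1, by omega⟩
  simp only [JR, Set.mem_setOf_eq, Set.mem_compl_iff, Set.mem_singleton_iff, Fin.ext_iff,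
    not_not] at h0 h1
  omega

lemma IT_ne_JR (hn : 4 ≤ n) {M M' : ℕ} (hM : 2 ≤ M) : IT n M ≠ JR n M' := by
  intro h
  rw [Set.ext_iff] at h
  have h0 := h ⟨0, by omega⟩
  simp only [IT, JR, Set.mem_setOf_eq] at h0
  omega

lemma IT_ne_co_JR (hn : 4 ≤ n) {M M' : ℕ} (hM : 2 ≤ M) (hM' : 2 ≤ M') : IT n M ≠ (JR n M')ᶜ := by
  intro h
  rw [Set.ext_iff] at h
  have h0 := h ⟨1, by omega⟩
  simp only [IT, JR, Set.mem_setOf_eq, Set.mem_compl_iff] at h0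
  omega

lemma IT_inj (hn : 4 ≤ n) {M M' : ℕ} (hM : M ≤ n - 2) (hM' : M' ≤ n - 2) (h : IT n M = IT n M') : M = M' := by
  by_contra hne
  rw [Set.ext_iff] at h
  rcases Nat.lt_or_ge M M' with hlt | hge
  · have h2 := (h ⟨M, by omega⟩).mpr (by simp only [IT, Set.mem_setOf_eq, Fin.val_mk]; omega)
    simp only [IT, Set.mem_setOf_eq, Fin.val_mk] at h2
    omega
  · have hlt : M' < M := by omega
    have h2 := (h ⟨M', by omega⟩).mp (by simp only [IT, Set.mem_setOf_eq, Fin.val_mk]; omega)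
    simp only [IT, Set.mem_setOf_eq, Fin.val_mk] at h2
    omega

lemma IT_ne_co_IT (hn : 4 ≤ n) {M M' : ℕ} (hM : 2 ≤ M) (hM' : 2 ≤ M') : IT n M ≠ (IT n M')ᶜ := by
  intro h
  rw [Set.ext_iff] at h
  have h0 := h ⟨0, by omega⟩
  simp only [IT, Set.mem_setOf_eq, Set.mem_compl_iff] at h0
  omega

lemma JR_inj (hn : 4 ≤ n) {M M' : ℕ} (hM : 2 ≤ M) (hM2 : M ≤ n - 2) (hM' : 2 ≤ M') (hM'2 : M' ≤ n - 2)
    (h : JR n M = JR n M') : M = M' := by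
  by_contra hne
  rw [Set.ext_iff] at h
  rcases Nat.lt_or_ge M M' with hlt | hge
  · have h2 := (h ⟨M', by omega⟩).mpr (by simp only [JR, Set.mem_setOf_eq, Fin.val_mk]; omega)
    simp only [JR, Set.mem_setOf_eq, Fin.val_mk] at h2
    omega
  · have h2 := (h ⟨M, by omega⟩).mp (by simp only [JR, Set.mem_setOf_eq, Fin.val_mk]; omega)
    simp only [JR, Set.mem_setOf_eq, Fin.val_mk] at h2
    omega

lemma JR_ne_co_JR (hn : 4 ≤ n) {M M' : ℕ} (hM : 2 ≤ M) (hM' : 2 ≤ M') : JR n M ≠ (JR n M')ᶜ := by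
  intro h
  rw [Set.ext_iff] at h
  have h0 := h ⟨1, by omega⟩
  simp only [JR, Set.mem_setOf_eq, Set.mem_compl_iff] at h0
  omega

end Distinct
end SprMax
noncomputable section
namespace SprMax
open Classical Sum SimpleGraph

variable {n : ℕ}

lemma AT_not_in_R (hn : 4 ≤ n) {σ : Sym2 (Set (Fin n))} (hσ : σ ∈ ATFam n) :
    σ ∉ TrivFam n ∪ ARFam n := by
  obtain ⟨M, h2, hMn, rfl⟩ := hσ
  rintro (⟨x, hx⟩ | ⟨M', h2', hMn', hx⟩)
  · rw [Sym2.eq_iff] at hx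
    rcases hx with ⟨h, -⟩ | ⟨h, -⟩
    · exact IT_ne_single hn h2 x h
    · exact IT_ne_co_single hn hMn x h
  · rw [Sym2.eq_iff] at hx
    rcases hx with ⟨h, -⟩ | ⟨h, -⟩
    · exact IT_ne_JR hn h2 h
    · exact IT_ne_co_JR hn h2 h2' h

lemma AR_not_in_T (hn : 4 ≤ n) {σ : Sym2 (Set (Fin n))} (hσ : σ ∈ ARFam n) :
    σ ∉ TrivFam n ∪ ATFam n := by
  obtain ⟨M, h2, hMn, rfl⟩ := hσ
  rintro (⟨x, hx⟩ | ⟨M', h2', hMn', hx⟩)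
  · rw [Sym2.eq_iff] at hx
    rcases hx with ⟨h, -⟩ | ⟨h, -⟩
    · exact JR_ne_single hn h2 hMn x h
    · exact JR_ne_co_single hn hMn x h
  · rw [Sym2.eq_iff] at hx
    rcases hx with ⟨h, -⟩ | ⟨h, -⟩
    · exact IT_ne_JR hn h2' h.symm
    · refine IT_ne_co_JR hn h2' h2 ?_
      rw [← compl_compl (IT n M')]
      rw [← h]

lemma symmDiff_splits (hn : 4 ≤ n) :
    symmDiff (splits (catTree hn (Equiv.refl (Fin n)))) (splits (catTree hn (rot hn))) =
      ATFam n ∪ ARFam n := by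
  rw [splits_T hn, splits_R hn]
  ext σ
  rw [Set.mem_symmDiff]
  constructor
  · rintro (⟨hin, hout⟩ | ⟨hin, hout⟩)
    · rcases hin with h | h
      · exact absurd (Or.inl h) hout
      · exact Or.inl h
    · rcases hin with h | h
      · exact absurd (Or.inl h) hout
      · exact Or.inr h
  · rintro (h | h)
    · exact Or.inl ⟨Or.inr h, AT_not_in_R hn h⟩
    · exact Or.inr ⟨Or.inr h, AR_not_in_T hn h⟩

lemma ATFam_eq_image :
    ATFam n = (fun M : ℕ => s(IT n M, (IT n M)ᶜ)) '' ↑(Finset.Icc 2 (n-2)) := by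
  ext σ
  simp only [ATFam, Set.mem_setOf_eq, Set.mem_image, Finset.coe_Icc, Set.mem_Icc]
  constructor
  · rintro ⟨M, h2, hMn, rfl⟩; exact ⟨M, ⟨h2, hMn⟩, rfl⟩
  · rintro ⟨M, ⟨h2, hMn⟩, rfl⟩; exact ⟨M, h2, hMn, rfl⟩

lemma ARFam_eq_image :
    ARFam n = (fun M : ℕ => s(JR n M, (JR n M)ᶜ)) '' ↑(Finset.Icc 2 (n-2)) := by
  ext σ
  simp only [ARFam, Set.mem_setOf_eq, Set.mem_image, Finset.coe_Icc, Set.mem_Icc]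
  constructor
  · rintro ⟨M, h2, hMn, rfl⟩; exact ⟨M, ⟨h2, hMn⟩, rfl⟩
  · rintro ⟨M, ⟨h2, hMn⟩, rfl⟩; exact ⟨M, h2, hMn, rfl⟩

lemma ATFam_ncard (hn : 4 ≤ n) : (ATFam n).ncard = n - 3 := by
  rw [ATFam_eq_image]
  rw [Set.ncard_image_of_injOn]
  · rw [Set.ncard_coe_finset, Nat.card_Icc]
    omega
  · intro M hM M' hM' h
    simp only [Finset.coe_Icc, Set.mem_Icc] at hM hM'
    rw [Sym2.eq_iff] at h
    rcases h with ⟨h1, -⟩ | ⟨h1, -⟩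
    · exact IT_inj hn hM.2 hM'.2 h1
    · exact absurd h1 (IT_ne_co_IT hn hM.1 hM'.1)

lemma ARFam_ncard (hn : 4 ≤ n) : (ARFam n).ncard = n - 3 := by
  rw [ARFam_eq_image]
  rw [Set.ncard_image_of_injOn]
  · rw [Set.ncard_coe_finset, Nat.card_Icc]
    omega
  · intro M hM M' hM' h
    simp only [Finset.coe_Icc, Set.mem_Icc] at hM hM'
    rw [Sym2.eq_iff] at h
    rcases h with ⟨h1, -⟩ | ⟨h1, -⟩
    · exact JR_inj hn hM.1 hM.2 hM'.1 hM'.2 h1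
    · exact absurd h1 (JR_ne_co_JR hn hM.1 hM'.1)

lemma dRF_eq (hn : 4 ≤ n) :
    dRF (catTree hn (Equiv.refl (Fin n))) (catTree hn (rot hn)) = 2 * (n - 3) := by
  show (symmDiff (splits (catTree hn (Equiv.refl (Fin n)))) (splits (catTree hn (rot hn)))).ncard
    = 2 * (n - 3)
  rw [symmDiff_splits hn]
  have hfinAT : (ATFam n).Finite := by
    rw [ATFam_eq_image]; exact (Finset.Icc 2 (n-2)).finite_toSet.image _
  have hfinAR : (ARFam n).Finite := by
    rw [ARFam_eq_image]; exact (Finset.Icc 2 (n-2)).finite_toSet.image _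
  have hdisj : Disjoint (ATFam n) (ARFam n) := by
    rw [Set.disjoint_left]
    intro σ hσ hσ'
    exact AT_not_in_R hn hσ (Or.inr hσ')
  rw [Set.ncard_union_eq hdisj hfinAT hfinAR, ATFam_ncard hn, ARFam_ncard hn]
  omega

lemma not_isom (hn : 4 ≤ n) :
    ¬ Isom (catTree hn (Equiv.refl (Fin n))) (catTree hn (rot hn)) := by
  intro hiso
  have hsp := isom_splits hiso
  have hmem : s(IT n 2, (IT n 2)ᶜ) ∈ splits (catTree hn (Equiv.refl (Fin n))) := by
    rw [splits_T hn]
    exact Or.inr ⟨2, le_refl 2, by omega, rfl⟩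
  rw [hsp, splits_R hn] at hmem
  exact AT_not_in_R hn ⟨2, le_refl 2, by omega, rfl⟩ hmem

end SprMax
noncomputable section
namespace SprMax
open Classical Sum SimpleGraph

variable {n : ℕ}

def zro (hn : 4 ≤ n) : Fin n := ⟨0, by omega⟩

lemma clades_T (hn : 4 ≤ n) :
    clades (catTree hn (Equiv.refl (Fin n))) {zro hn} = {({zro hn} : Set (Fin n))} := by
  ext B
  simp only [clades, Set.mem_sep_iff, Set.mem_singleton_iff]
  constructor
  · rintro ⟨hB, hsub⟩
    rw [sides_T hn] at hB
    rcases hB with ⟨x, (rfl | rfl)⟩ | ⟨M, h2, hMn, (rfl | rfl)⟩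
    · have hx : x ∈ ({zro hn} : Set (Fin n)) := hsub rfl
      rw [Set.mem_singleton_iff] at hx
      rw [hx]
    · exfalso
      by_cases hx1 : (⟨1, by omega⟩ : Fin n) = x
      · have hm : (⟨2, by omega⟩ : Fin n) ∈ ({x} : Set (Fin n))ᶜ := by
          simp only [Set.mem_compl_iff, Set.mem_singleton_iff, ← hx1, Fin.ext_iff, Fin.val_mk]
          omega
        have hc := hsub hm
        simp only [Set.mem_singleton_iff, zro, Fin.ext_iff, Fin.val_mk] at hc
        omega
      · have hm : (⟨1, by omega⟩ : Fin n) ∈ ({x} : Set (Fin n))ᶜ := by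
          simp only [Set.mem_compl_iff, Set.mem_singleton_iff]
          exact hx1
        have hc := hsub hm
        simp only [Set.mem_singleton_iff, zro, Fin.ext_iff, Fin.val_mk] at hc
        omega
    · exfalso
      have hm : (⟨1, by omega⟩ : Fin n) ∈ IT n M := by
        simp only [IT, Set.mem_setOf_eq, Fin.val_mk]; omega
      have hc := hsub hm
      simp only [Set.mem_singleton_iff, zro, Fin.ext_iff, Fin.val_mk] at hc
      omega
    · exfalso
      have hm : (⟨n-1, by omega⟩ : Fin n) ∈ (IT n M)ᶜ := by
        simp only [IT, Set.mem_compl_iff, Set.mem_setOf_eq, Fin.val_mk]; omega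
      have hc := hsub hm
      simp only [Set.mem_singleton_iff, zro, Fin.ext_iff, Fin.val_mk] at hc
      omega
  · rintro rfl
    refine ⟨?_, Set.Subset.refl _⟩
    rw [sides_T hn]
    exact Or.inl ⟨zro hn, Or.inl rfl⟩

lemma clades_R (hn : 4 ≤ n) :
    clades (catTree hn (rot hn)) {zro hn} = {({zro hn} : Set (Fin n))} := by
  ext B
  simp only [clades, Set.mem_sep_iff, Set.mem_singleton_iff]
  constructor
  · rintro ⟨hB, hsub⟩
    rw [sides_R hn] at hB
    rcases hB with ⟨x, (rfl | rfl)⟩ | ⟨M, h2, hMn, (rfl | rfl)⟩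
    · have hx : x ∈ ({zro hn} : Set (Fin n)) := hsub rfl
      rw [Set.mem_singleton_iff] at hx
      rw [hx]
    · exfalso
      by_cases hx1 : (⟨1, by omega⟩ : Fin n) = x
      · have hm : (⟨2, by omega⟩ : Fin n) ∈ ({x} : Set (Fin n))ᶜ := by
          simp only [Set.mem_compl_iff, Set.mem_singleton_iff, ← hx1, Fin.ext_iff, Fin.val_mk]
          omega
        have hc := hsub hm
        simp only [Set.mem_singleton_iff, zro, Fin.ext_iff, Fin.val_mk] at hc
        omega
      · have hm : (⟨1, by omega⟩ : Fin n) ∈ ({x} : Set (Fin n))ᶜ := by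
          simp only [Set.mem_compl_iff, Set.mem_singleton_iff]
          exact hx1
        have hc := hsub hm
        simp only [Set.mem_singleton_iff, zro, Fin.ext_iff, Fin.val_mk] at hc
        omega
    · exfalso
      have hm : (⟨1, by omega⟩ : Fin n) ∈ JR n M := by
        simp only [JR, Set.mem_setOf_eq, Fin.val_mk]; omega
      have hc := hsub hm
      simp only [Set.mem_singleton_iff, zro, Fin.ext_iff, Fin.val_mk] at hc
      omega
    · exfalso
      have hm : (⟨n-1, by omega⟩ : Fin n) ∈ (JR n M)ᶜ := by
        simp only [JR, Set.mem_compl_iff, Set.mem_setOf_eq, Fin.val_mk]; omega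
      have hc := hsub hm
      simp only [Set.mem_singleton_iff, zro, Fin.ext_iff, Fin.val_mk] at hc
      omega
  · rintro rfl
    refine ⟨?_, Set.Subset.refl _⟩
    rw [sides_R hn]
    exact Or.inl ⟨zro hn, Or.inl rfl⟩

lemma restr_eq (hn : 4 ≤ n) :
    restrSides (catTree hn (Equiv.refl (Fin n))) ({zro hn} : Set (Fin n))ᶜ =
      restrSides (catTree hn (rot hn)) ({zro hn} : Set (Fin n))ᶜ := by
  unfold restrSides
  apply Set.Subset.antisymm
  · rintro C ⟨B, hB, rfl⟩
    rw [sides_T hn] at hB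
    rcases hB with ⟨x, (rfl | rfl)⟩ | ⟨M, h2, hMn, (rfl | rfl)⟩
    · exact ⟨{x}, by rw [sides_R hn]; exact Or.inl ⟨x, Or.inl rfl⟩, rfl⟩
    · exact ⟨{x}ᶜ, by rw [sides_R hn]; exact Or.inl ⟨x, Or.inr rfl⟩, rfl⟩
    · rcases Nat.lt_or_ge M 3 with h3 | h3
      · refine ⟨{(⟨1, by omega⟩ : Fin n)},
          by rw [sides_R hn]; exact Or.inl ⟨_, Or.inl rfl⟩, ?_⟩
        ext y
        have hy := y.isLt
        simp only [IT, Set.mem_inter_iff, Set.mem_setOf_eq, Set.mem_compl_iff,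
          Set.mem_singleton_iff, Fin.ext_iff, Fin.val_mk, zro]
        omega
      · refine ⟨JR n (M-1),
          by rw [sides_R hn]; exact Or.inr ⟨M-1, by omega, by omega, Or.inl rfl⟩, ?_⟩
        ext y
        have hy := y.isLt
        simp only [IT, JR, Set.mem_inter_iff, Set.mem_setOf_eq, Set.mem_compl_iff,
          Set.mem_singleton_iff, Fin.ext_iff, Fin.val_mk, zro]
        omega
    · rcases Nat.lt_or_ge M 3 with h3 | h3
      · refine ⟨({(⟨1, by omega⟩ : Fin n)} : Set (Fin n))ᶜ,
          by rw [sides_R hn]; exact Or.inl ⟨_, Or.inr rfl⟩, ?_⟩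
        ext y
        have hy := y.isLt
        simp only [IT, Set.mem_inter_iff, Set.mem_setOf_eq, Set.mem_compl_iff,
          Set.mem_singleton_iff, Fin.ext_iff, Fin.val_mk, zro]
        omega
      · refine ⟨(JR n (M-1))ᶜ,
          by rw [sides_R hn]; exact Or.inr ⟨M-1, by omega, by omega, Or.inr rfl⟩, ?_⟩
        ext y
        have hy := y.isLt
        simp only [IT, JR, Set.mem_inter_iff, Set.mem_setOf_eq, Set.mem_compl_iff,
          Set.mem_singleton_iff, Fin.ext_iff, Fin.val_mk, zro]
        omega
  · rintro C ⟨B, hB, rfl⟩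
    rw [sides_R hn] at hB
    rcases hB with ⟨x, (rfl | rfl)⟩ | ⟨M, h2, hMn, (rfl | rfl)⟩
    · exact ⟨{x}, by rw [sides_T hn]; exact Or.inl ⟨x, Or.inl rfl⟩, rfl⟩
    · exact ⟨{x}ᶜ, by rw [sides_T hn]; exact Or.inl ⟨x, Or.inr rfl⟩, rfl⟩
    · rcases Nat.lt_or_ge M (n-2) with htop | htop
      · refine ⟨IT n (M+1),
          by rw [sides_T hn]; exact Or.inr ⟨M+1, by omega, by omega, Or.inl rfl⟩, ?_⟩
        ext y
        have hy := y.isLt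
        simp only [IT, JR, Set.mem_inter_iff, Set.mem_setOf_eq, Set.mem_compl_iff,
          Set.mem_singleton_iff, Fin.ext_iff, Fin.val_mk, zro]
        omega
      · refine ⟨({(⟨n-1, by omega⟩ : Fin n)} : Set (Fin n))ᶜ,
          by rw [sides_T hn]; exact Or.inl ⟨_, Or.inr rfl⟩, ?_⟩
        ext y
        have hy := y.isLt
        simp only [JR, Set.mem_inter_iff, Set.mem_setOf_eq, Set.mem_compl_iff,
          Set.mem_singleton_iff, Fin.ext_iff, Fin.val_mk, zro]
        omega
    · rcases Nat.lt_or_ge M (n-2) with htop | htop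
      · refine ⟨(IT n (M+1))ᶜ,
          by rw [sides_T hn]; exact Or.inr ⟨M+1, by omega, by omega, Or.inr rfl⟩, ?_⟩
        ext y
        have hy := y.isLt
        simp only [IT, JR, Set.mem_inter_iff, Set.mem_setOf_eq, Set.mem_compl_iff,
          Set.mem_singleton_iff, Fin.ext_iff, Fin.val_mk, zro]
        omega
      · refine ⟨{(⟨n-1, by omega⟩ : Fin n)},
          by rw [sides_T hn]; exact Or.inl ⟨_, Or.inl rfl⟩, ?_⟩
        ext y
        have hy := y.isLt
        simp only [JR, Set.mem_inter_iff, Set.mem_setOf_eq, Set.mem_compl_iff,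
          Set.mem_singleton_iff, Fin.ext_iff, Fin.val_mk, zro]
        omega

end SprMax

/-- for every `n ≥ 4` there are trees on `n` leaves that are one
SPR move apart yet at maximum RF distance `2 * (n - 3)`. -/
theorem spr_neighbor_with_max_rf (n : ℕ) (hn : 4 ≤ n) :
    ∃ T R : PhyloTree (Fin n), SPRAdj T R ∧ dRF T R = 2 * (n - 3) := by
  refine ⟨SprMax.catTree hn (Equiv.refl (Fin n)), SprMax.catTree hn (SprMax.rot hn),
    ⟨SprMax.not_isom hn, {SprMax.zro hn}, ?_, ?_, ?_, SprMax.restr_eq hn⟩, SprMax.dRF_eq hn⟩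
  · rw [SprMax.splits_T hn]; exact Or.inl ⟨SprMax.zro hn, rfl⟩
  · rw [SprMax.splits_R hn]; exact Or.inl ⟨SprMax.zro hn, rfl⟩
  · rw [SprMax.clades_T hn, SprMax.clades_R hn]
end
end
end
end
end
end
end
end
end
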